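/- arXiv:2305.16451 — 4 statements merged into one kernel-verified Lean document; each statement's English description precedes it below -/
import Mathlib

section
/- Let G be a connected simple graph. Then σ⁻(G) = 1 if and only if there exists an edge e contained in every spanning tree of G such that for every spanning tree T of G, some minimizing parity labeling of T has exactly the single negative edge e. -/
open SimpleGraph

variable {V : Type*}

/-- The set of "negative" edges of `G` under the parity labeling induced by
the bijection `f : V ≃ Fin (Fintype.card V)`: edges whose endpoint labels
have opposite parity. -/
def negSet [Fintype V] (G : SimpleGraph V) (f : V ≃ Fin (Fintype.card V)) : Set (Sym2 V) :=
  {e ∈ G.edgeSet |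
    Sym2.lift ⟨fun u v => ((f u : ℕ) % 2 ≠ (f v : ℕ) % 2), fun u v => propext ne_comm⟩ e}

/-- The number of negative edges under the labeling `f`. -/
noncomputable def negCount [Fintype V] (G : SimpleGraph V) (f : V ≃ Fin (Fintype.card V)) : ℕ :=
  (negSet G f).ncard

/-- The rna number of `G`: the minimum number of negative edges over all parity labelings. -/
noncomputable def rna [Fintype V] (G : SimpleGraph V) : ℕ :=
  sInf (Set.range (negCount G))

/-- `C(G)`: minimum of `||S₁| − |S₂||` over partitions of the vertex set into two
nonempty parts each inducing a connected subgraph. -/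
noncomputable def Cval [Fintype V] (G : SimpleGraph V) : ℕ :=
  sInf {d | ∃ S : Set V, S.Nonempty ∧ Sᶜ.Nonempty ∧ (G.induce S).Connected ∧
    (G.induce Sᶜ).Connected ∧ d = ((S.ncard : ℤ) - (Sᶜ.ncard : ℤ)).natAbs}

/-- `G` is a star: some center `c` is adjacent exactly to all other vertices,
with no other edges. -/
def IsStar (G : SimpleGraph V) : Prop :=
  ∃ c : V, ∀ a b : V, G.Adj a b ↔ (a ≠ b ∧ (a = c ∨ b = c))


/-- Any walk between two mod-2 distinct labels crosses a negative edge. -/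
lemma cross_lemma {T : SimpleGraph V} (f : V → ℕ) {x y : V} (p : T.Walk x y)
    (hxy : f x % 2 ≠ f y % 2) :
    ∃ a b, T.Adj a b ∧ f a % 2 ≠ f b % 2 := by
  obtain ⟨d, _, hd1, hd2⟩ := p.exists_boundary_dart {w | f w % 2 = f x % 2} rfl
    (by simpa using (Ne.symm hxy))
  exact ⟨d.fst, d.snd, d.adj, by simp only [Set.mem_setOf_eq] at hd1 hd2; omega⟩

lemma walk_parity {H : SimpleGraph V} (f : V → ℕ)
    (hH : ∀ a b, H.Adj a b → f a % 2 = f b % 2) {x y : V} (h : H.Reachable x y) :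
    f x % 2 = f y % 2 := by
  obtain ⟨p⟩ := h
  induction p with
  | nil => rfl
  | cons h' p ih => exact (hH _ _ h').trans ih

lemma reach_of_walk {G : SimpleGraph V} {u v : V}
    (hr : (G \ fromEdgeSet {s(u, v)}).Reachable u v) {x y : V} (p : G.Walk x y) :
    (G \ fromEdgeSet {s(u, v)}).Reachable x y := by
  induction p with
  | nil => exact Reachable.refl _
  | @cons a b c h' p ih =>
    refine Reachable.trans ?_ ih
    by_cases he : s(a, b) = s(u, v)
    · rcases Sym2.eq_iff.mp he with ⟨rfl, rfl⟩ | ⟨rfl, rfl⟩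
      · exact hr
      · exact hr.symm
    · exact Adj.reachable (by simp [sdiff_adj, fromEdgeSet_adj, h', he])

lemma exists_spanning_tree_aux [Fintype V] :
    ∀ (n : ℕ) (G : SimpleGraph V), G.edgeSet.ncard ≤ n → G.Connected →
      ∃ T ≤ G, T.IsTree := by
  intro n
  induction n with
  | zero =>
    intro G hn hc
    refine ⟨G, le_rfl, hc, ?_⟩
    intro v c hcyc
    have h3 := hcyc.three_le_length
    have hlen : 0 < c.edges.length := by rw [SimpleGraph.Walk.length_edges]; omega
    obtain ⟨e, he⟩ := List.exists_mem_of_length_pos hlen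
    have : e ∈ G.edgeSet := c.edges_subset_edgeSet he
    have := Set.ncard_pos (G.edgeSet.toFinite) |>.mpr ⟨e, this⟩
    omega
  | succ n ih =>
    intro G hn hc
    by_cases hac : G.IsAcyclic
    · exact ⟨G, le_rfl, hc, hac⟩
    · rw [isAcyclic_iff_forall_adj_isBridge] at hac
      push_neg at hac
      obtain ⟨u, v, hadj, hnb⟩ := hac
      rw [isBridge_iff] at hnb
      push_neg at hnb
      have hr : (G \ fromEdgeSet {s(u, v)}).Reachable u v := hnb
      set G' := G \ fromEdgeSet {s(u, v)} with hG'
      have hconn' : G'.Connected := by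
        rw [connected_iff] at hc ⊢
        refine ⟨fun x y => ?_, hc.2⟩
        obtain ⟨p⟩ := hc.1 x y
        exact reach_of_walk hr p
      have hle : G' ≤ G := sdiff_le
      have hcard : G'.edgeSet.ncard ≤ n := by
        have h1 : G'.edgeSet ⊆ G.edgeSet \ {s(u, v)} := by
          intro e he
          induction e with
          | h a b =>
            rw [mem_edgeSet, hG', sdiff_adj, fromEdgeSet_adj] at he
            refine ⟨G.mem_edgeSet.mpr he.1, ?_⟩
            simp only [Set.mem_singleton_iff]
            intro h
            exact he.2 ⟨h ▸ rfl, he.1.ne⟩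
        have h2 : (G.edgeSet \ {s(u, v)}).ncard ≤ n := by
          have := Set.ncard_diff_singleton_lt_of_mem (G.mem_edgeSet.mpr hadj)
            (G.edgeSet.toFinite)
          omega
        exact le_trans (Set.ncard_le_ncard h1 (Set.toFinite _)) h2
      obtain ⟨T, hT1, hT2⟩ := ih G' hcard hconn'
      exact ⟨T, le_trans hT1 hle, hT2⟩

lemma exists_spanning_tree [Fintype V] (G : SimpleGraph V) (hc : G.Connected) :
    ∃ T ≤ G, T.IsTree :=
  exists_spanning_tree_aux G.edgeSet.ncard G le_rfl hc

lemma reach_u_or_v {T : SimpleGraph V} (v : V) :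
    ∀ {x w : V} (_ : T.Walk x w),
      (T \ fromEdgeSet {s(w, v)}).Reachable x w ∨
        (T \ fromEdgeSet {s(w, v)}).Reachable x v := by
  intro x w p
  induction p with
  | nil => exact Or.inl (Reachable.refl _)
  | @cons a b c h' p ih =>
    by_cases he : s(a, b) = s(c, v)
    · rcases Sym2.eq_iff.mp he with ⟨h1, h2⟩ | ⟨h1, h2⟩
      · exact Or.inl (h1 ▸ Reachable.refl a)
      · exact Or.inr (h1 ▸ Reachable.refl a)
    · have hadj : (T \ fromEdgeSet {s(c, v)}).Adj a b := by
        simp [sdiff_adj, fromEdgeSet_adj, h', he]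
      rcases ih with h | h
      · exact Or.inl ((Adj.reachable hadj).trans h)
      · exact Or.inr ((Adj.reachable hadj).trans h)


lemma mem_negSet [Fintype V] {G : SimpleGraph V} {f : V ≃ Fin (Fintype.card V)} {a b : V} :
    s(a, b) ∈ negSet G f ↔ G.Adj a b ∧ (f a : ℕ) % 2 ≠ (f b : ℕ) % 2 := by
  simp [negSet]

lemma one_le_negCount [Fintype V] {G : SimpleGraph V} (hc : G.Connected)
    (hE : G.edgeSet.Nonempty) (f : V ≃ Fin (Fintype.card V)) : 1 ≤ negCount G f := by
  obtain ⟨e, he⟩ := hE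
  have hnt : Nontrivial V := by
    induction e with
    | h a b => exact ⟨a, b, (G.mem_edgeSet.mp he).ne⟩
  have hcard : 1 < Fintype.card V := Fintype.one_lt_card
  set x := f.symm ⟨0, by omega⟩ with hx
  set y := f.symm ⟨1, by omega⟩ with hy
  have hxy : (f x : ℕ) % 2 ≠ (f y : ℕ) % 2 := by
    simp [hx, hy]
  obtain ⟨p⟩ := hc.preconnected x y
  obtain ⟨a, b, hab, hne⟩ := cross_lemma (fun w => (f w : ℕ)) p hxy
  have : s(a, b) ∈ negSet G f := mem_negSet.mpr ⟨hab, hne⟩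
  have hpos := Set.ncard_pos ((negSet G f).toFinite) |>.mpr ⟨_, this⟩
  exact hpos

lemma rna_le [Fintype V] (G : SimpleGraph V) (f : V ≃ Fin (Fintype.card V)) :
    rna G ≤ negCount G f :=
  Nat.sInf_le ⟨f, rfl⟩

lemma one_le_rna [Fintype V] {G : SimpleGraph V} (hc : G.Connected)
    (hE : G.edgeSet.Nonempty) : 1 ≤ rna G :=
  le_csInf ⟨_, Fintype.equivFin V, rfl⟩ (by rintro _ ⟨f, rfl⟩; exact one_le_negCount hc hE f)


lemma negSet_mono [Fintype V] {T G : SimpleGraph V} (h : T ≤ G)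
    (f : V ≃ Fin (Fintype.card V)) : negSet T f ⊆ negSet G f :=
  fun _ hg => ⟨edgeSet_mono h hg.1, hg.2⟩

/-- σ⁻(G) = 1 iff there is an edge e lying in every spanning tree of G such that
every spanning tree T admits a minimizing parity labeling whose unique negative
edge is e. -/
theorem rna_eq_one_iff_spanning_trees {V : Type*} [Fintype V] (G : SimpleGraph V)
    (hconn : G.Connected) :
    rna G = 1 ↔ ∃ e ∈ G.edgeSet,
      (∀ T : SimpleGraph V, T ≤ G → T.IsTree → e ∈ T.edgeSet) ∧
      (∀ T : SimpleGraph V, T ≤ G → T.IsTree →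
        ∃ f : V ≃ Fin (Fintype.card V), negCount T f = rna T ∧ negSet T f = {e}) := by
  constructor
  · intro h
    have hmem : sInf (Set.range (negCount G)) ∈ Set.range (negCount G) :=
      Nat.sInf_mem ⟨_, ⟨Fintype.equivFin V, rfl⟩⟩
    obtain ⟨f, hf⟩ := hmem
    have hf1 : (negSet G f).ncard = 1 := by
      have : rna G = negCount G f := hf.symm
      rw [h] at this
      exact this.symm
    obtain ⟨e, he⟩ := Set.ncard_eq_one.mp hf1
    have heN : e ∈ negSet G f := by rw [he]; exact Set.mem_singleton e
    induction e using Sym2.ind with | _ u v =>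
    rw [mem_negSet] at heN
    have hbridge : ∀ T : SimpleGraph V, T ≤ G → T.IsTree → s(u, v) ∈ T.edgeSet := by
      intro T hle ht
      obtain ⟨p⟩ := ht.isConnected.preconnected u v
      obtain ⟨a, b, hab, hne⟩ := cross_lemma (fun w => (f w : ℕ)) p heN.2
      have hmemN : s(a, b) ∈ negSet G f := mem_negSet.mpr ⟨hle hab, hne⟩
      rw [he, Set.mem_singleton_iff] at hmemN
      rw [← hmemN]
      exact T.mem_edgeSet.mpr hab
    refine ⟨s(u, v), G.mem_edgeSet.mpr heN.1, hbridge, ?_⟩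
    intro T hle ht
    have heT : s(u, v) ∈ T.edgeSet := hbridge T hle ht
    have hset : negSet T f = {s(u, v)} := by
      apply Set.eq_singleton_iff_unique_mem.mpr
      refine ⟨mem_negSet.mpr ⟨T.mem_edgeSet.mp heT, heN.2⟩, fun g hg => ?_⟩
      have hgG := negSet_mono hle f hg
      rw [he, Set.mem_singleton_iff] at hgG
      exact hgG
    have hcount : negCount T f = 1 := by rw [negCount, hset, Set.ncard_singleton]
    refine ⟨f, ?_, hset⟩
    have hA : rna T ≤ 1 := hcount ▸ rna_le T f
    have hB : 1 ≤ rna T := one_le_rna ht.isConnected ⟨_, heT⟩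
    omega
  · rintro ⟨e, heG, h1, h2⟩
    obtain ⟨T, hle, ht⟩ := exists_spanning_tree G hconn
    obtain ⟨f, _, hset⟩ := h2 T hle ht
    have heT : e ∈ negSet T f := by rw [hset]; exact Set.mem_singleton e
    induction e using Sym2.ind with | _ u v =>
    rw [mem_negSet] at heT
    obtain ⟨hTadj, hpar⟩ := heT
    have hnc : ∀ a b, (T \ fromEdgeSet {s(u, v)}).Adj a b →
        (f a : ℕ) % 2 = (f b : ℕ) % 2 := by
      intro a b hab
      rw [sdiff_adj, fromEdgeSet_adj] at hab
      by_contra hne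
      have hmemN : s(a, b) ∈ negSet T f := mem_negSet.mpr ⟨hab.1, hne⟩
      rw [hset, Set.mem_singleton_iff] at hmemN
      exact hab.2 ⟨Set.mem_singleton_iff.mpr hmemN, hab.1.ne⟩
    have hNG : negSet G f = {s(u, v)} := by
      apply Set.eq_singleton_iff_unique_mem.mpr
      refine ⟨mem_negSet.mpr ⟨G.mem_edgeSet.mp heG, hpar⟩, fun g hg => ?_⟩
      induction g using Sym2.ind with | _ a b =>
      rw [mem_negSet] at hg
      obtain ⟨hGab, hab⟩ := hg
      by_contra hne
      set D := T \ fromEdgeSet {s(u, v)} with hD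
      set T' := D ⊔ fromEdgeSet {s(a, b)} with hT'
      have hT'le : T' ≤ G := by
        refine sup_le (le_trans sdiff_le hle) ?_
        have hmono : fromEdgeSet {s(a, b)} ≤ fromEdgeSet G.edgeSet :=
          fromEdgeSet_mono (Set.singleton_subset_iff.mpr (G.mem_edgeSet.mpr hGab))
        rwa [fromEdgeSet_edgeSet] at hmono
      have hreach : ∀ x : V, D.Reachable x u ∨ D.Reachable x v := by
        intro x
        obtain ⟨p⟩ := ht.isConnected.preconnected x u
        exact reach_u_or_v v p
      have hpres : ∀ {x y : V}, D.Reachable x y → (f x : ℕ) % 2 = (f y : ℕ) % 2 :=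
        fun hxy => walk_parity _ hnc hxy
      have hDle : D ≤ T' := le_sup_left
      have habT' : T'.Adj a b := by
        rw [hT', sup_adj, fromEdgeSet_adj]
        exact Or.inr ⟨Set.mem_singleton _, hGab.ne⟩
      have huv' : T'.Reachable u v := by
        rcases hreach a with ha | ha <;> rcases hreach b with hb | hb
        · exact absurd ((hpres ha).trans (hpres hb).symm) hab
        · exact ((ha.symm.mono hDle).trans habT'.reachable).trans (hb.mono hDle)
        · exact ((hb.symm.mono hDle).trans habT'.symm.reachable).trans
            (ha.mono hDle)
        · exact absurd ((hpres ha).trans (hpres hb).symm) hab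
      have hconn' : T'.Connected := by
        rw [connected_iff]
        refine ⟨fun x y => ?_, hconn.nonempty⟩
        have hk : ∀ z : V, T'.Reachable z u := by
          intro z
          rcases hreach z with hz | hz
          · exact hz.mono hDle
          · exact (hz.mono hDle).trans huv'.symm
        exact (hk x).trans (hk y).symm
      have heT' : s(u, v) ∉ T'.edgeSet := by
        rw [T'.mem_edgeSet]
        intro hadj
        rw [hT', sup_adj] at hadj
        rcases hadj with hh | hh
        · rw [hD, sdiff_adj, fromEdgeSet_adj] at hh
          exact hh.2 ⟨Set.mem_singleton _, hh.1.ne⟩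
        · rw [fromEdgeSet_adj, Set.mem_singleton_iff] at hh
          exact hne hh.1.symm
      obtain ⟨T₂, hT₂le, hT₂⟩ := exists_spanning_tree T' hconn'
      exact heT' (edgeSet_mono hT₂le (h1 T₂ (le_trans hT₂le hT'le) hT₂))
    have hle1 : rna G ≤ 1 := by
      have hc1 : negCount G f = 1 := by rw [negCount, hNG, Set.ncard_singleton]
      exact hc1 ▸ rna_le G f
    have hge1 : 1 ≤ rna G := one_le_rna hconn ⟨_, heG⟩
    omega
end

section
/- Let G be a connected graph of order n with two incident cut-edges uv and vw (sharing vertex v), let G₁, G₂, G₃ be the three components of G − {uv, vw} with v ∈ G₃ and deg(v) ≥ 3. If (a) |G₁| + |G₂| ∈ {⌈n/2⌉, ⌊n/2⌋}, (b) |G₁| < ⌊n/2⌋ and |G₂| < ⌊n/2⌋, and (c) whenever n is odd and |G₃| = ⌈n/2⌉ one has deg(v) > 3, then σ⁻(G) = 2 and the cut {uv, vw} realizes the minimum. -/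
open SimpleGraph

variable {V : Type*}

namespace RnaAux

lemma exists_cross_of_walk {G : SimpleGraph V} {S : Set V} :
    ∀ {a b : V}, G.Walk a b → a ∈ S → b ∉ S → ∃ x y, G.Adj x y ∧ x ∈ S ∧ y ∉ S := by
  intro a b p
  induction p with
  | nil => intro h h'; exact absurd h h'
  | @cons a c b h q ih =>
    intro ha hb
    by_cases hc : c ∈ S
    · exact ih hc hb
    · exact ⟨a, c, h, ha, hc⟩

lemma reach_or_endpoint {G : SimpleGraph V} (F : Set (Sym2 V)) :
    ∀ {a b : V}, G.Walk a b → (G.deleteEdges F).Reachable a b ∨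
      ∃ e ∈ F, ∃ c, c ∈ e ∧ (G.deleteEdges F).Reachable a c := by
  intro a b p
  induction p with
  | nil => exact Or.inl (Reachable.refl _)
  | @cons a c b h q ih =>
    by_cases hm : s(a, c) ∈ F
    · exact Or.inr ⟨s(a, c), hm, a, Sym2.mem_mk_left a c, Reachable.refl _⟩
    · have hadj : (G.deleteEdges F).Adj a c := by
        rw [SimpleGraph.deleteEdges_adj]; exact ⟨h, hm⟩
      rcases ih with h1 | ⟨e, he, d, hd, hr⟩
      · exact Or.inl (hadj.reachable.trans h1)
      · exact Or.inr ⟨e, he, d, hd, hadj.reachable.trans hr⟩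

lemma reach_const {G : SimpleGraph V} {f : V → ℕ} (hP : ∀ a b, G.Adj a b → f a = f b) :
    ∀ {a b : V}, G.Reachable a b → f a = f b := by
  intro a b h
  obtain ⟨p⟩ := h
  induction p with
  | nil => rfl
  | @cons a c b h q ih => exact (hP _ _ h).trans ih

lemma reach_avoid {G H : SimpleGraph V} (hH : H ≤ G) {v : V} {F : Set (Sym2 V)}
    (hF : ∀ e ∈ F, v ∈ e) :
    ∀ {a b : V}, H.Walk a b → (∀ c, H.Reachable a c → c ≠ v) →
      (G.deleteEdges F).Reachable a b := by
  intro a b p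
  induction p with
  | nil => intro _; exact Reachable.refl _
  | @cons a c b h q ih =>
    intro hv
    have h1 : a ≠ v := hv a (Reachable.refl a)
    have h2 : c ≠ v := hv c h.reachable
    have hadj : (G.deleteEdges F).Adj a c := by
      rw [SimpleGraph.deleteEdges_adj]
      refine ⟨hH h, fun hm => ?_⟩
      have hmem := hF _ hm
      rw [Sym2.mem_iff] at hmem
      rcases hmem with h' | h'
      · exact h1 h'.symm
      · exact h2 h'.symm
    exact hadj.reachable.trans (ih (fun d hd => hv d (h.reachable.trans hd)))

lemma card_even_range (n : ℕ) :
    ((Finset.range n).filter (fun i => i % 2 = 0)).card = (n + 1) / 2 := by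
  induction n with
  | zero => simp
  | succ m ih =>
    rw [Finset.range_add_one, Finset.filter_insert]
    by_cases h : m % 2 = 0
    · rw [if_pos h, Finset.card_insert_of_notMem (by simp)]
      omega
    · rw [if_neg h]
      omega

lemma ncard_even_fin (n : ℕ) : {i : Fin n | (i : ℕ) % 2 = 0}.ncard = (n + 1) / 2 := by
  classical
  have himg : Fin.val '' {i : Fin n | (i : ℕ) % 2 = 0} =
      ↑((Finset.range n).filter (fun i => i % 2 = 0)) := by
    ext m
    simp only [Set.mem_image, Set.mem_setOf_eq, Finset.coe_filter, Finset.mem_range]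
    constructor
    · rintro ⟨i, hi, rfl⟩
      exact ⟨i.isLt, hi⟩
    · rintro ⟨h1, h2⟩
      exact ⟨⟨m, h1⟩, h2, rfl⟩
  rw [← Set.ncard_image_of_injective _ Fin.val_injective, himg, Set.ncard_coe_finset,
    card_even_range]

lemma exists_parity_equiv {V : Type*} [Fintype V] (S : Set V)
    (T : Set (Fin (Fintype.card V))) (h : S.ncard = T.ncard) :
    ∃ f : V ≃ Fin (Fintype.card V), ∀ a, a ∈ S ↔ f a ∈ T := by
  classical
  have h1 : Fintype.card S = Fintype.card T := by
    rw [← Nat.card_eq_fintype_card, ← Nat.card_eq_fintype_card,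
      Nat.card_coe_set_eq, Nat.card_coe_set_eq]
    exact h
  have h2 : Fintype.card ↥Sᶜ = Fintype.card ↥Tᶜ := by
    rw [Fintype.card_compl_set, Fintype.card_compl_set, h1, Fintype.card_fin]
  let e1 : S ≃ T := Fintype.equivOfCardEq h1
  let e2 : ↥Sᶜ ≃ ↥Tᶜ := Fintype.equivOfCardEq h2
  refine ⟨(Equiv.Set.sumCompl S).symm.trans ((e1.sumCongr e2).trans (Equiv.Set.sumCompl T)),
    fun a => ?_⟩
  by_cases ha : a ∈ S
  · simp only [Equiv.trans_apply, Equiv.Set.sumCompl_symm_apply_of_mem ha,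
      Equiv.sumCongr_apply, Sum.map_inl, Equiv.Set.sumCompl_apply_inl]
    exact iff_of_true ha (e1 ⟨a, ha⟩).2
  · simp only [Equiv.trans_apply, Equiv.Set.sumCompl_symm_apply_of_notMem ha,
      Equiv.sumCongr_apply, Sum.map_inr, Equiv.Set.sumCompl_apply_inr]
    exact iff_of_false ha (e2 ⟨a, ha⟩).2

end RnaAux

/-- Sufficient condition for σ⁻(G) = 2 via two incident cut-edges uv, vw.
Here `A`, `B`, `C` are the components of `G − {uv, vw}` containing `u`, `w`, `v`
respectively. -/
theorem rna_eq_two_incident_bridges {V : Type*} [Fintype V] (G : SimpleGraph V) (n : ℕ)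
    (hcard : Fintype.card V = n) (hconn : G.Connected)
    (u v w : V) (huv : G.Adj u v) (hvw : G.Adj v w) (huw : u ≠ w)
    (hb1 : G.IsBridge s(u, v)) (hb2 : G.IsBridge s(v, w))
    (hdeg : 3 ≤ (G.neighborSet v).ncard)
    (ha : {x | (G.deleteEdges {s(u, v), s(v, w)}).Reachable x u}.ncard +
            {x | (G.deleteEdges {s(u, v), s(v, w)}).Reachable x w}.ncard = (n + 1) / 2 ∨
          {x | (G.deleteEdges {s(u, v), s(v, w)}).Reachable x u}.ncard +
            {x | (G.deleteEdges {s(u, v), s(v, w)}).Reachable x w}.ncard = n / 2)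
    (hb : {x | (G.deleteEdges {s(u, v), s(v, w)}).Reachable x u}.ncard < n / 2 ∧
          {x | (G.deleteEdges {s(u, v), s(v, w)}).Reachable x w}.ncard < n / 2)
    (hc : Odd n → {x | (G.deleteEdges {s(u, v), s(v, w)}).Reachable x v}.ncard = (n + 1) / 2 →
          3 < (G.neighborSet v).ncard) :
    rna G = 2 ∧ ∃ f : V ≃ Fin (Fintype.card V),
      negCount G f = 2 ∧ negSet G f = {s(u, v), s(v, w)} := by
  classical
  subst hcard
  set n := Fintype.card V with hn
  set G' := G.deleteEdges {s(u, v), s(v, w)} with hG'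
  set A := {x | G'.Reachable x u} with hA
  set B := {x | G'.Reachable x w} with hB
  set C := {x | G'.Reachable x v} with hC
  have hne12 : s(u, v) ≠ s(v, w) := by
    intro hcontra
    rw [Sym2.eq_iff] at hcontra
    rcases hcontra with ⟨h1, h2⟩ | ⟨h1, h2⟩
    · exact huv.ne h1
    · exact huw h1
  have hnuv : ¬G'.Reachable u v := by
    intro h
    exact (isBridge_iff.mp hb1)
      (h.mono (deleteEdges_anti (Set.singleton_subset_iff.mpr (Set.mem_insert _ _))))
  have hnvw : ¬G'.Reachable v w := by
    intro h
    exact (isBridge_iff.mp hb2)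
      (h.mono (deleteEdges_anti (Set.singleton_subset_iff.mpr (by simp))))
  have hnuw : ¬G'.Reachable u w := by
    intro h
    have h2 : (G.deleteEdges {s(u, v)}).Reachable u w :=
      h.mono (deleteEdges_anti (Set.singleton_subset_iff.mpr (Set.mem_insert _ _)))
    have h3 : (G.deleteEdges {s(u, v)}).Adj w v := by
      rw [deleteEdges_adj]
      refine ⟨hvw.symm, fun hm => ?_⟩
      rw [Set.mem_singleton_iff, Sym2.eq_iff] at hm
      rcases hm with ⟨h1, _⟩ | ⟨h1, _⟩
      · exact huw h1.symm
      · exact hvw.ne h1.symm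
    exact (isBridge_iff.mp hb1) (h2.trans h3.reachable)
  have hcover : ∀ z, z ∈ A ∨ z ∈ B ∨ z ∈ C := by
    intro z
    obtain ⟨p⟩ := hconn.preconnected z v
    rcases RnaAux.reach_or_endpoint {s(u, v), s(v, w)} p with h | ⟨e, he, cc, hcc, hr⟩
    · exact Or.inr (Or.inr h)
    · simp only [Set.mem_insert_iff, Set.mem_singleton_iff] at he
      rcases he with rfl | rfl
      · rw [Sym2.mem_iff] at hcc
        rcases hcc with rfl | rfl
        · exact Or.inl hr
        · exact Or.inr (Or.inr hr)
      · rw [Sym2.mem_iff] at hcc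
        rcases hcc with rfl | rfl
        · exact Or.inr (Or.inr hr)
        · exact Or.inr (Or.inl hr)
  have hABd : ∀ z, z ∈ A → z ∈ B → False :=
    fun z (h1 : G'.Reachable z u) (h2 : G'.Reachable z w) => hnuw (h1.symm.trans h2)
  have hACd : ∀ z, z ∈ A → z ∈ C → False :=
    fun z (h1 : G'.Reachable z u) (h2 : G'.Reachable z v) => hnuv (h1.symm.trans h2)
  have hBCd : ∀ z, z ∈ B → z ∈ C → False :=
    fun z (h1 : G'.Reachable z w) (h2 : G'.Reachable z v) => hnvw (h2.symm.trans h1)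
  have hdAB : Disjoint A B := Set.disjoint_left.mpr fun {z} h1 h2 => hABd z h1 h2
  have hsum : A.ncard + B.ncard + C.ncard = n := by
    have hdABC : Disjoint (A ∪ B) C := by
      rw [Set.disjoint_left]
      rintro z (h | h) hzC
      · exact hACd z h hzC
      · exact hBCd z h hzC
    have huniv : A ∪ B ∪ C = Set.univ := Set.eq_univ_of_forall (fun z => by
      rcases hcover z with h | h | h
      · exact Or.inl (Or.inl h)
      · exact Or.inl (Or.inr h)
      · exact Or.inr h)
    have hcard := congrArg Set.ncard huniv
    rw [Set.ncard_union_eq hdABC (Set.toFinite _) (Set.toFinite _),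
      Set.ncard_union_eq hdAB (Set.toFinite _) (Set.toFinite _), Set.ncard_univ,
      Nat.card_eq_fintype_card, ← hn] at hcard
    exact hcard
  have hn4 : 4 ≤ n := by
    have h1 : v ∉ G.neighborSet v := by simp
    have h2 := Set.ncard_insert_of_notMem h1 (Set.toFinite _)
    have h3 : (insert v (G.neighborSet v)).ncard ≤ n := by
      have h4 := Set.ncard_le_ncard (Set.subset_univ (insert v (G.neighborSet v)))
        (Set.toFinite _)
      rwa [Set.ncard_univ, Nat.card_eq_fintype_card, ← hn] at h4
    omega
  have huA : u ∈ A := Reachable.refl u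
  have hwB : w ∈ B := Reachable.refl w
  have hvC : v ∈ C := Reachable.refl v
  -- upper bound labeling
  obtain ⟨c, hc2, hT⟩ : ∃ c, c < 2 ∧
      (A ∪ B).ncard = {i : Fin n | (i : ℕ) % 2 = c}.ncard := by
    have hU : (A ∪ B).ncard = A.ncard + B.ncard :=
      Set.ncard_union_eq hdAB (Set.toFinite _) (Set.toFinite _)
    rcases ha with h | h
    · exact ⟨0, by norm_num, by rw [hU, h, RnaAux.ncard_even_fin]⟩
    · refine ⟨1, by norm_num, ?_⟩
      have hcompl : {i : Fin n | (i : ℕ) % 2 = 1} = {i : Fin n | (i : ℕ) % 2 = 0}ᶜ := by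
        ext i
        simp only [Set.mem_setOf_eq, Set.mem_compl_iff]
        omega
      have h2 := Set.ncard_add_ncard_compl {i : Fin n | (i : ℕ) % 2 = 0}
      rw [Nat.card_eq_fintype_card, Fintype.card_fin] at h2
      have h3 := RnaAux.ncard_even_fin n
      rw [hU, h, hcompl]
      omega
  obtain ⟨f, hf⟩ := RnaAux.exists_parity_equiv (A ∪ B) {i : Fin n | (i : ℕ) % 2 = c} hT
  have hf' : ∀ a, a ∈ A ∪ B ↔ (f a : ℕ) % 2 = c := hf
  have hvS : v ∉ A ∪ B := by
    rintro (h | h)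
    · exact hACd v h hvC
    · exact hBCd v h hvC
  have hpar : ∀ a b : V, (a ∈ A ∪ B ↔ b ∈ A ∪ B) → (f a : ℕ) % 2 = (f b : ℕ) % 2 := by
    intro a b hiff
    have h1 := hf' a
    have h2 := hf' b
    have m1 : (f a : ℕ) % 2 < 2 := Nat.mod_lt _ (by norm_num)
    have m2 : (f b : ℕ) % 2 < 2 := Nat.mod_lt _ (by norm_num)
    by_cases hbS : b ∈ A ∪ B
    · have e1 := h1.mp (hiff.mpr hbS)
      have e2 := h2.mp hbS
      omega
    · have na : a ∉ A ∪ B := fun h => hbS (hiff.mp h)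
      have e1 : ¬(f a : ℕ) % 2 = c := fun h => na (h1.mpr h)
      have e2 : ¬(f b : ℕ) % 2 = c := fun h => hbS (h2.mpr h)
      omega
  have hsame : ∀ a b : V, G'.Adj a b → (a ∈ A ∪ B ↔ b ∈ A ∪ B) := by
    intro a b hab
    have hr : G'.Reachable b a := hab.symm.reachable
    constructor
    · rintro (h | h)
      · exact Or.inl (hr.trans h)
      · exact Or.inr (hr.trans h)
    · rintro (h | h)
      · exact Or.inl (hab.reachable.trans h)
      · exact Or.inr (hab.reachable.trans h)
  have hG'adj : ∀ a b : V, G.Adj a b → s(a, b) ≠ s(u, v) → s(a, b) ≠ s(v, w) → G'.Adj a b := by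
    intro a b h h1 h2
    rw [hG', deleteEdges_adj]
    exact ⟨h, by simp [h1, h2]⟩
  have hparu : (f u : ℕ) % 2 = c := (hf' u).mp (Or.inl huA)
  have hparw : (f w : ℕ) % 2 = c := (hf' w).mp (Or.inr hwB)
  have hparv : (f v : ℕ) % 2 ≠ c := fun h => hvS ((hf' v).mpr h)
  have hsetEq : negSet G f = {s(u, v), s(v, w)} := by
    ext e
    induction e using Sym2.ind with
    | _ a b =>
      simp only [negSet, Set.mem_setOf_eq, mem_edgeSet, Sym2.lift_mk, Set.mem_insert_iff,
        Set.mem_singleton_iff]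
      constructor
      · rintro ⟨hadj, hne⟩
        by_contra hcon
        push_neg at hcon
        exact hne (hpar a b (hsame a b (hG'adj a b hadj hcon.1 hcon.2)))
      · rintro (h | h) <;> rw [Sym2.eq_iff] at h
        · rcases h with ⟨rfl, rfl⟩ | ⟨rfl, rfl⟩
          · exact ⟨huv, by omega⟩
          · exact ⟨huv.symm, by omega⟩
        · rcases h with ⟨rfl, rfl⟩ | ⟨rfl, rfl⟩
          · exact ⟨hvw, by omega⟩
          · exact ⟨hvw.symm, by omega⟩
  have hcount : negCount G f = 2 := by
    show (negSet G f).ncard = 2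
    rw [hsetEq]
    exact Set.ncard_pair hne12
  -- lower bound
  have hlow : ∀ g : V ≃ Fin n, 2 ≤ negCount G g := by
    intro g
    by_contra hlt
    push_neg at hlt
    have hlt' : (negSet G g).ncard < 2 := hlt
    set Sg := {a : V | (g a : ℕ) % 2 = 0} with hSg
    have hSgcard : Sg.ncard = (n + 1) / 2 := by
      have himg : ⇑g '' Sg = {i : Fin n | (i : ℕ) % 2 = 0} := by
        ext i
        simp only [Set.mem_image, Set.mem_setOf_eq]
        constructor
        · rintro ⟨a, ha2, rfl⟩
          exact ha2
        · intro hi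
          exact ⟨g.symm i,
            by simp only [hSg, Set.mem_setOf_eq, Equiv.apply_symm_apply]; exact hi, by simp⟩
      have h4 := Set.ncard_image_of_injective Sg g.injective
      rw [himg, RnaAux.ncard_even_fin] at h4
      exact h4.symm
    have hSgc : Sgᶜ.ncard = n / 2 := by
      have h2 := Set.ncard_add_ncard_compl Sg
      rw [Nat.card_eq_fintype_card, ← hn] at h2
      omega
    obtain ⟨a0, ha0⟩ : Sg.Nonempty := Set.nonempty_of_ncard_ne_zero (by omega)
    obtain ⟨b0, hb0⟩ : Sgᶜ.Nonempty := Set.nonempty_of_ncard_ne_zero (by omega)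
    obtain ⟨p⟩ := hconn.preconnected a0 b0
    obtain ⟨x, y, hxy, hxS, hyS⟩ := RnaAux.exists_cross_of_walk p ha0 hb0
    have hxS' : (g x : ℕ) % 2 = 0 := hxS
    have hyS' : ¬(g y : ℕ) % 2 = 0 := hyS
    have hmemneg : s(x, y) ∈ negSet G g := by
      refine ⟨hxy, ?_⟩
      show (g x : ℕ) % 2 ≠ (g y : ℕ) % 2
      omega
    have h1le : 1 ≤ (negSet G g).ncard := by
      have h5 := (Set.ncard_pos (Set.toFinite _)).mpr ⟨_, hmemneg⟩
      omega
    obtain ⟨e₀, he₀⟩ := Set.ncard_eq_one.mp (show (negSet G g).ncard = 1 by omega)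
    have hexy : e₀ = s(x, y) := by
      have h6 := he₀ ▸ hmemneg
      exact (Set.mem_singleton_iff.mp h6).symm
    rw [hexy] at he₀
    set G1 := G.deleteEdges {s(x, y)} with hG1
    have F1 : ∀ a b : V, G1.Adj a b → (g a : ℕ) % 2 = (g b : ℕ) % 2 := by
      intro a b hab
      rw [hG1, deleteEdges_adj, Set.mem_singleton_iff] at hab
      by_contra hne
      have h7 : s(a, b) ∈ negSet G g := ⟨hab.1, hne⟩
      rw [he₀, Set.mem_singleton_iff] at h7
      exact hab.2 h7
    have F2 : ∀ a b : V, G1.Reachable a b → (g a : ℕ) % 2 = (g b : ℕ) % 2 :=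
      fun a b h => RnaAux.reach_const F1 h
    have F3 : ¬G1.Reachable x y := fun h => hyS' ((F2 x y h).symm.trans hxS')
    set X := {z : V | G1.Reachable z x} with hX
    set Y := {z : V | G1.Reachable z y} with hY
    have F4 : ∀ z, z ∈ X ∨ z ∈ Y := by
      intro z
      obtain ⟨p'⟩ := hconn.preconnected z x
      rcases RnaAux.reach_or_endpoint {s(x, y)} p' with h | ⟨e, he, cc, hcc, hr⟩
      · exact Or.inl h
      · rw [Set.mem_singleton_iff] at he
        subst he
        rw [Sym2.mem_iff] at hcc
        rcases hcc with rfl | rfl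
        · exact Or.inl hr
        · exact Or.inr hr
    have F5 : ∀ z, z ∈ X → z ∈ Y → False :=
      fun z (h1 : G1.Reachable z x) (h2 : G1.Reachable z y) => F3 (h1.symm.trans h2)
    have hXS : X = Sg := by
      ext z
      constructor
      · intro hz
        show (g z : ℕ) % 2 = 0
        rw [F2 z x hz]
        exact hxS'
      · intro hz
        rcases F4 z with h | h
        · exact h
        · exact absurd ((F2 z y h).symm.trans hz) hyS'
    have hYS : Y = Sgᶜ := by
      ext z
      constructor
      · intro hz
        exact fun hzS => hyS' ((F2 z y hz).symm.trans hzS)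
      · intro hz
        rcases F4 z with h | h
        · exact absurd (show z ∈ Sg from (F2 z x h).trans hxS') hz
        · exact h
    have hXcard : X.ncard = (n + 1) / 2 := by rw [hXS]; exact hSgcard
    have hYcard : Y.ncard = n / 2 := by rw [hYS]; exact hSgc
    have hFv : ∀ e ∈ ({s(u, v), s(v, w)} : Set (Sym2 V)), v ∈ e := by
      intro e he
      simp only [Set.mem_insert_iff, Set.mem_singleton_iff] at he
      rcases he with rfl | rfl
      · exact Sym2.mem_mk_right u v
      · exact Sym2.mem_mk_left v w
    have main : ∀ q : V, n / 2 ≤ {z : V | G1.Reachable z q}.ncard →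
        ¬G1.Reachable v q → False := by
      intro q hq hvq
      have hZG' : ∀ z : V, G1.Reachable z q → G'.Reachable z q := by
        intro z hz
        have hz2 := hz
        obtain ⟨p'⟩ := hz2
        refine RnaAux.reach_avoid (by rw [hG1]; exact deleteEdges_le _) hFv p' ?_
        intro cc hcc hccv
        subst hccv
        exact hvq (hcc.symm.trans hz)
      have hbu := hb.1
      have hbw := hb.2
      rcases hcover q with hqA | hqB | hqC
      · have hsub : {z : V | G1.Reachable z q} ⊆ A := fun z hz => (hZG' z hz).trans hqA
        have h8 := Set.ncard_le_ncard hsub (Set.toFinite _)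
        omega
      · have hsub : {z : V | G1.Reachable z q} ⊆ B := fun z hz => (hZG' z hz).trans hqB
        have h8 := Set.ncard_le_ncard hsub (Set.toFinite _)
        omega
      · have hsub : {z : V | G1.Reachable z q} ⊆ C \ {v} := by
          intro z hz
          refine ⟨(hZG' z hz).trans hqC, ?_⟩
          intro hzv
          rw [Set.mem_singleton_iff] at hzv
          subst hzv
          exact hvq hz
        have hvC' : ({v} : Set V) ⊆ C := Set.singleton_subset_iff.mpr hvC
        have hdiff : (C \ {v}).ncard = C.ncard - 1 := by
          rw [Set.ncard_diff hvC' (Set.toFinite _), Set.ncard_singleton]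
        have hZle := Set.ncard_le_ncard hsub (Set.toFinite _)
        rcases ha with hA' | hA'
        · omega
        · have hodd : n % 2 = 1 := by omega
          have hC2 : C.ncard = (n + 1) / 2 := by omega
          have hdeg4 : 3 < (G.neighborSet v).ncard := hc (Nat.odd_iff.mpr hodd) hC2
          have hZeq : {z : V | G1.Reachable z q} = C \ {v} :=
            Set.eq_of_subset_of_ncard_le hsub (by omega) (Set.toFinite _)
          have hNn : 1 < ((G.neighborSet v) \ {u, w}).ncard := by
            have hle := Set.ncard_le_ncard_diff_add_ncard (G.neighborSet v) {u, w}
              (Set.toFinite _)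
            have hpairc : ({u, w} : Set V).ncard = 2 := Set.ncard_pair huw
            omega
          obtain ⟨z₁, z₂, hz₁, hz₂, hz12⟩ :=
            (Set.one_lt_ncard_iff (Set.toFinite _)).mp hNn
          have hpick : ∃ z', (z' ∈ (G.neighborSet v) \ ({u, w} : Set V)) ∧
              s(v, z') ≠ s(x, y) := by
            by_cases h1 : s(v, z₁) = s(x, y)
            · exact ⟨z₂, hz₂, fun h2 => hz12 (Sym2.congr_right.mp (h1.trans h2.symm))⟩
            · exact ⟨z₁, hz₁, h1⟩
          obtain ⟨z', hz'mem, hz'e⟩ := hpick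
          obtain ⟨hz'N, hz'uw⟩ := hz'mem
          have hadjz : G.Adj v z' := hz'N
          have hz'u : z' ≠ u := fun h => hz'uw (by rw [h]; exact Set.mem_insert u {w})
          have hz'w : z' ≠ w := fun h => hz'uw (by rw [h]; exact Set.mem_insert_of_mem u rfl)
          have hz'v : z' ≠ v := fun h => G.irrefl (h ▸ hadjz)
          have hz'C : z' ∈ C := by
            have hadj' : G'.Adj v z' := by
              rw [hG', deleteEdges_adj]
              refine ⟨hadjz, fun hm => ?_⟩
              simp only [Set.mem_insert_iff, Set.mem_singleton_iff, Sym2.eq_iff] at hm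
              rcases hm with (⟨h1, h2⟩ | ⟨h1, h2⟩) | (⟨h1, h2⟩ | ⟨h1, h2⟩)
              · exact huv.ne h1.symm
              · exact hz'u h2
              · exact hz'w h2
              · exact hz'v h2
            exact hadj'.symm.reachable
          have hz'Z : z' ∈ {z : V | G1.Reachable z q} := by
            rw [hZeq]
            exact ⟨hz'C, by simp [hz'v]⟩
          have hadj1 : G1.Adj v z' := by
            rw [hG1, deleteEdges_adj, Set.mem_singleton_iff]
            exact ⟨hadjz, hz'e⟩
          exact hvq (hadj1.reachable.trans hz'Z)
    rcases F4 v with hvX | hvY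
    · exact main y (by rw [← hY]; omega) (fun h => F5 v hvX h)
    · exact main x (by rw [← hX]; omega) (fun h => F5 v h hvY)
  have h2mem : 2 ∈ Set.range (negCount G) := ⟨f, hcount⟩
  constructor
  · refine le_antisymm (Nat.sInf_le h2mem) ?_
    refine le_csInf ⟨2, h2mem⟩ ?_
    rintro m ⟨g, rfl⟩
    exact hlow g
  · exact ⟨f, hcount, hsetEq⟩
end

section
/- Let G be a connected graph of order n with two non-incident cut-edges uv and xy, and let G₁, G₂, G₃ be the three components of G − {uv, xy} with v, y ∈ G₃. If (a) |G₁| + |G₂| ∈ {⌈n/2⌉, ⌊n/2⌋}, (b) |G₁| < ⌊n/2⌋ and |G₂| < ⌊n/2⌋, and (c) for every bridge e of G₃, one of the two components H, K of G − e satisfies |H| < ⌊n/2⌋ or |K| < ⌊n/2⌋, then σ⁻(G) = 2 with the minimum realized by the cut {uv, xy}. -/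
open SimpleGraph

variable {V : Type*}

/-- Along a walk from inside `S` to outside `S` there is a crossing edge. -/
lemma walk_cross {H : SimpleGraph V} (S : Set V) {a z : V}
    (w : H.Walk a z) : a ∈ S → z ∉ S →
    ∃ p q, H.Adj p q ∧ p ∈ S ∧ q ∉ S ∧ H.Reachable a p := by
  induction w with
  | nil => intro h1 h2; exact absurd h1 h2
  | @cons c d e h w ih =>
    intro h1 h2
    by_cases hd : d ∈ S
    · obtain ⟨p, q, hpq, hp, hq, hr⟩ := ih hd h2
      exact ⟨p, q, hpq, hp, hq, (h.reachable).trans hr⟩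
    · exact ⟨c, d, h, h1, hd, Reachable.refl c⟩

lemma filter_mod_two_card (n : ℕ) :
    ((Finset.range n).filter (fun i => i % 2 = 0)).card = (n + 1) / 2 ∧
    ((Finset.range n).filter (fun i => i % 2 = 1)).card = n / 2 := by
  induction n with
  | zero => simp
  | succ n ih =>
    obtain ⟨h0, h1⟩ := ih
    rw [Finset.range_add_one, Finset.filter_insert, Finset.filter_insert]
    rcases Nat.even_or_odd n with he | ho
    · have hn2 : n % 2 = 0 := Nat.even_iff.mp he
      rw [if_pos hn2, if_neg (by omega), Finset.card_insert_of_notMem (by simp)]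
      omega
    · have hn2 : n % 2 = 1 := Nat.odd_iff.mp ho
      rw [if_neg (by omega), if_pos hn2, Finset.card_insert_of_notMem (by simp)]
      omega

open scoped Classical in
lemma fin_parity_ncard (n r : ℕ) :
    {i : Fin n | (i : ℕ) % 2 = r}.ncard
      = ((Finset.range n).filter (fun i => i % 2 = r)).card := by
  rw [Set.ncard_eq_toFinset_card', Set.toFinset_setOf]
  apply Finset.card_bij (fun (a : Fin n) _ => (a : ℕ))
  · intro a ha
    simp only [Finset.mem_filter, Finset.mem_univ, true_and] at ha
    simp only [Finset.mem_filter, Finset.mem_range]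
    exact ⟨a.2, ha⟩
  · intro a _ b _ h; exact Fin.val_injective h
  · intro b hb
    simp only [Finset.mem_filter, Finset.mem_range] at hb
    exact ⟨⟨b, hb.1⟩, by simp [hb.2], rfl⟩

lemma fin_parity_ncard_ge (n r : ℕ) (hr : r < 2) :
    n / 2 ≤ {i : Fin n | (i : ℕ) % 2 = r}.ncard := by
  rw [fin_parity_ncard]
  obtain ⟨h0, h1⟩ := filter_mod_two_card n
  interval_cases r
  · rw [h0]; omega
  · rw [h1]

lemma class_ncard [Fintype V] (g : V ≃ Fin (Fintype.card V)) (r : ℕ) :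
    {t : V | ((g t : ℕ)) % 2 = r}.ncard
      = {i : Fin (Fintype.card V) | (i : ℕ) % 2 = r}.ncard := by
  have h : {t : V | ((g t : ℕ)) % 2 = r} = g.symm '' {i | (i : ℕ) % 2 = r} := by
    ext t
    simp only [Set.mem_image, Set.mem_setOf_eq]
    constructor
    · intro h; exact ⟨g t, h, g.symm_apply_apply t⟩
    · rintro ⟨i, hi, rfl⟩; simpa using hi
  rw [h, Set.ncard_image_of_injective _ g.symm.injective]

lemma fincard_coe_eq_ncard {α : Type*} (s : Set α) [Fintype ↥s] :
    Fintype.card ↥s = s.ncard := by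
  rw [← Nat.card_eq_fintype_card, Nat.card_coe_set_eq]

/-- Sufficient condition for σ⁻(G) = 2 via two non-incident cut-edges uv, xy.
Here the components of `G − {uv, xy}` containing `u`, `x` and `v` (the latter also
contains `y`) play the roles of `G₁`, `G₂`, `G₃`. -/
theorem rna_eq_two_nonincident_bridges {V : Type*} [Fintype V] (G : SimpleGraph V) (n : ℕ)
    (hcard : Fintype.card V = n) (hconn : G.Connected)
    (u v x y : V) (huv : G.Adj u v) (hxy : G.Adj x y)
    (hnonincident : ({u, v} : Set V) ∩ {x, y} = ∅)
    (hb1 : G.IsBridge s(u, v)) (hb2 : G.IsBridge s(x, y))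
    (hvy : (G.deleteEdges {s(u, v), s(x, y)}).Reachable v y)
    (ha : {z | (G.deleteEdges {s(u, v), s(x, y)}).Reachable z u}.ncard +
            {z | (G.deleteEdges {s(u, v), s(x, y)}).Reachable z x}.ncard = (n + 1) / 2 ∨
          {z | (G.deleteEdges {s(u, v), s(x, y)}).Reachable z u}.ncard +
            {z | (G.deleteEdges {s(u, v), s(x, y)}).Reachable z x}.ncard = n / 2)
    (hb : {z | (G.deleteEdges {s(u, v), s(x, y)}).Reachable z u}.ncard < n / 2 ∧
          {z | (G.deleteEdges {s(u, v), s(x, y)}).Reachable z x}.ncard < n / 2)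
    (hc : ∀ a b : V, (G.deleteEdges {s(u, v), s(x, y)}).Reachable a v →
          (G.deleteEdges {s(u, v), s(x, y)}).Reachable b v → G.IsBridge s(a, b) →
          {z | (G.deleteEdges {s(a, b)}).Reachable z a}.ncard < n / 2 ∨
          {z | (G.deleteEdges {s(a, b)}).Reachable z b}.ncard < n / 2) :
    rna G = 2 ∧ ∃ f : V ≃ Fin (Fintype.card V),
      negCount G f = 2 ∧ negSet G f = {s(u, v), s(x, y)} := by
  classical
  subst hcard
  -- distinctness
  have hmem4 : ∀ z : V, z ∈ ({u, v} : Set V) → z ∈ ({x, y} : Set V) → False := by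
    intro z h1 h2
    exact Set.eq_empty_iff_forall_notMem.mp hnonincident z ⟨h1, h2⟩
  have hux : u ≠ x := fun h => hmem4 u (by simp) (by simp [h])
  have huy : u ≠ y := fun h => hmem4 u (by simp) (by simp [h])
  have hvx : v ≠ x := fun h => hmem4 v (by simp) (by simp [h])
  have hvyne : v ≠ y := fun h => hmem4 v (by simp) (by simp [h])
  have hne : s(u, v) ≠ s(x, y) := by
    intro h
    rcases Sym2.eq_iff.mp h with ⟨h1, _⟩ | ⟨h1, _⟩
    · exact hux h1
    · exact huy h1
  set D := G.deleteEdges {s(u, v), s(x, y)} with hD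
  set Su := {z | D.Reachable z u} with hSu
  set Sx := {z | D.Reachable z x} with hSx
  set Sv := {z | D.Reachable z v} with hSv
  have humem : u ∈ Su := Reachable.refl u
  have hxmem : x ∈ Sx := Reachable.refl x
  have hvmem : v ∈ Sv := Reachable.refl v
  have hymem : y ∈ Sv := hvy.symm
  have hDadj : ∀ {p q : V}, D.Adj p q → G.Adj p q := by
    intro p q h
    rw [hD, deleteEdges_adj] at h
    exact h.1
  have hDle1 : D ≤ G.deleteEdges {s(u, v)} := by
    intro p q h
    rw [hD, deleteEdges_adj] at h
    rw [deleteEdges_adj]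
    refine ⟨h.1, fun hm => h.2 ?_⟩
    simp only [Set.mem_singleton_iff] at hm
    simp [hm]
  have hDle2 : D ≤ G.deleteEdges {s(x, y)} := by
    intro p q h
    rw [hD, deleteEdges_adj] at h
    rw [deleteEdges_adj]
    refine ⟨h.1, fun hm => h.2 ?_⟩
    simp only [Set.mem_singleton_iff] at hm
    simp [hm]
  have hb1' : ¬ (G.deleteEdges {s(u, v)}).Reachable u v := isBridge_iff.mp hb1
  have hb2' : ¬ (G.deleteEdges {s(x, y)}).Reachable x y := isBridge_iff.mp hb2
  have clos : ∀ {w p q : V}, D.Adj p q → D.Reachable p w → D.Reachable q w :=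
    fun h hr => (h.symm.reachable).trans hr
  have tri : ∀ p q : V, G.Adj p q →
      D.Adj p q ∨ s(p, q) = s(u, v) ∨ s(p, q) = s(x, y) := by
    intro p q h
    by_cases h1 : s(p, q) = s(u, v)
    · exact Or.inr (Or.inl h1)
    by_cases h2 : s(p, q) = s(x, y)
    · exact Or.inr (Or.inr h2)
    · left
      rw [hD, deleteEdges_adj]
      exact ⟨h, by simp [h1, h2]⟩
  -- disjointness of the three components
  have hUV : ∀ z, z ∈ Su → z ∈ Sv → False := by
    intro z h1 h2
    exact hb1' (Reachable.mono hDle1 (h1.symm.trans h2))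
  have hXV : ∀ z, z ∈ Sx → z ∈ Sv → False := by
    intro z h1 h2
    exact hb2' (Reachable.mono hDle2 ((h1.symm.trans h2).trans hvy))
  have hUX : ∀ z, z ∈ Su → z ∈ Sx → False := by
    intro z h1 h2
    have hux' : (G.deleteEdges {s(u, v)}).Reachable u x :=
      Reachable.mono hDle1 (h1.symm.trans h2)
    have hxy' : (G.deleteEdges {s(u, v)}).Adj x y := by
      rw [deleteEdges_adj]
      exact ⟨hxy, by simp only [Set.mem_singleton_iff]; exact fun h => hne h.symm⟩
    have hyv : (G.deleteEdges {s(u, v)}).Reachable y v :=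
      Reachable.mono hDle1 hvy.symm
    exact hb1' (hux'.trans (hxy'.reachable.trans hyv))
  -- the three components cover V
  have hcov : ∀ z, z ∈ Su ∨ z ∈ Sx ∨ z ∈ Sv := by
    intro z
    by_contra hz
    push_neg at hz
    obtain ⟨hz1, hz2, hz3⟩ := hz
    obtain ⟨w⟩ := hconn.preconnected u z
    obtain ⟨p, q, hpq, hp, hq, -⟩ := walk_cross (Su ∪ Sx ∪ Sv) w
      (Or.inl (Or.inl humem)) (by simp [hz1, hz2, hz3])
    rcases tri p q hpq with h | h | h
    · rcases hp with (hp | hp) | hp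
      · exact hq (Or.inl (Or.inl (clos h hp)))
      · exact hq (Or.inl (Or.inr (clos h hp)))
      · exact hq (Or.inr (clos h hp))
    · rcases Sym2.eq_iff.mp h with ⟨_, rfl⟩ | ⟨_, rfl⟩
      · exact hq (Or.inr hvmem)
      · exact hq (Or.inl (Or.inl humem))
    · rcases Sym2.eq_iff.mp h with ⟨_, rfl⟩ | ⟨_, rfl⟩
      · exact hq (Or.inr hymem)
      · exact hq (Or.inl (Or.inr hxmem))
  -- boundary edges
  have hbdU : ∀ p q : V, G.Adj p q → p ∈ Su → q ∉ Su → s(p, q) = s(u, v) := by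
    intro p q hpq hp hq
    rcases tri p q hpq with h | h | h
    · exact absurd (clos h hp) hq
    · exact h
    · exfalso
      rcases Sym2.eq_iff.mp h with ⟨rfl, _⟩ | ⟨rfl, _⟩
      · exact hUX p hp hxmem
      · exact hUV p hp hymem
  have hbdX : ∀ p q : V, G.Adj p q → p ∈ Sx → q ∉ Sx → s(p, q) = s(x, y) := by
    intro p q hpq hp hq
    rcases tri p q hpq with h | h | h
    · exact absurd (clos h hp) hq
    · exfalso
      rcases Sym2.eq_iff.mp h with ⟨rfl, _⟩ | ⟨rfl, _⟩
      · exact hUX p humem hp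
      · exact hXV p hp hvmem
    · exact h
  -- the set A = G₁ ∪ G₂
  set A := Su ∪ Sx with hA
  have hAcard : A.ncard = Su.ncard + Sx.ncard :=
    Set.ncard_union_eq (Set.disjoint_left.mpr (fun {z} h1 h2 => hUX z h1 h2))
      (Set.toFinite _) (Set.toFinite _)
  have hAcompl : Aᶜ = Sv := by
    ext z
    simp only [Set.mem_compl_iff, hA, Set.mem_union]
    constructor
    · intro h
      rcases hcov z with h1 | h1 | h1
      · exact absurd (Or.inl h1) h
      · exact absurd (Or.inr h1) h
      · exact h1
    · rintro h (h1 | h1)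
      · exact hUV z h1 h
      · exact hXV z h1 h
  have hmemA : ∀ z, z ∈ Sv → z ∉ A := by
    intro z h
    rw [← hAcompl] at h
    exact h
  -- building the labeling from a cardinality match
  have hAkey : ∀ r : ℕ, r < 2 →
      A.ncard = {i : Fin (Fintype.card V) | (i : ℕ) % 2 = r}.ncard →
      ∃ f : V ≃ Fin (Fintype.card V), ∀ z : V, ((f z : ℕ) % 2 = r) ↔ z ∈ A := by
    intro r hr hcardA
    set P := {i : Fin (Fintype.card V) | (i : ℕ) % 2 = r} with hP
    have h1 : Fintype.card ↥A = Fintype.card ↥P := by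
      rw [fincard_coe_eq_ncard, fincard_coe_eq_ncard, hcardA]
    have hsum1 : A.ncard + Aᶜ.ncard = Fintype.card V := by
      rw [Set.ncard_add_ncard_compl A, Nat.card_eq_fintype_card]
    have hsum2 : P.ncard + Pᶜ.ncard = Fintype.card V := by
      rw [Set.ncard_add_ncard_compl P, Nat.card_eq_fintype_card, Fintype.card_fin]
    have h2 : Fintype.card ↥(Aᶜ) = Fintype.card ↥(Pᶜ) := by
      rw [fincard_coe_eq_ncard, fincard_coe_eq_ncard]
      omega
    let e1 : ↥A ≃ ↥P := Fintype.equivOfCardEq h1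
    let e2 : ↥(Aᶜ) ≃ ↥(Pᶜ) := Fintype.equivOfCardEq h2
    refine ⟨(Equiv.Set.sumCompl A).symm.trans ((e1.sumCongr e2).trans (Equiv.Set.sumCompl P)), ?_⟩
    intro z
    by_cases hz : z ∈ A
    · have hfz : ((Equiv.Set.sumCompl A).symm.trans
          ((e1.sumCongr e2).trans (Equiv.Set.sumCompl P))) z = ↑(e1 ⟨z, hz⟩) := by
        simp [Equiv.Set.sumCompl_symm_apply_of_mem hz]
      rw [hfz]
      exact iff_of_true (e1 ⟨z, hz⟩).2 hz
    · have hfz : ((Equiv.Set.sumCompl A).symm.trans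
          ((e1.sumCongr e2).trans (Equiv.Set.sumCompl P))) z = ↑(e2 ⟨z, hz⟩) := by
        simp [Equiv.Set.sumCompl_symm_apply_of_notMem hz]
      rw [hfz]
      exact iff_of_false (e2 ⟨z, hz⟩).2 hz
  -- characterization of the negative edge set
  have negSetEq : ∀ (r : ℕ), r < 2 → ∀ f : V ≃ Fin (Fintype.card V),
      (∀ z : V, ((f z : ℕ) % 2 = r) ↔ z ∈ A) →
      negSet G f = {s(u, v), s(x, y)} := by
    intro r hr f hf
    ext e
    induction e using Sym2.ind with
    | _ p q =>
      simp only [negSet, Set.mem_sep_iff, mem_edgeSet, Sym2.lift_mk, Set.mem_insert_iff,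
        Set.mem_singleton_iff]
      constructor
      · rintro ⟨hpq, hlift⟩
        rcases tri p q hpq with h | h | h
        · exfalso
          have hbp : (f p : ℕ) % 2 < 2 := Nat.mod_lt _ (by norm_num)
          have hbq : (f q : ℕ) % 2 < 2 := Nat.mod_lt _ (by norm_num)
          have hside : p ∈ A ↔ q ∈ A := by
            rcases hcov p with h1 | h1 | h1
            · exact iff_of_true (Or.inl h1) (Or.inl (clos h h1))
            · exact iff_of_true (Or.inr h1) (Or.inr (clos h h1))
            · exact iff_of_false (hmemA p h1) (hmemA q (clos h h1))
          by_cases hpA : p ∈ A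
          · have h1 : (f p : ℕ) % 2 = r := (hf p).mpr hpA
            have h2 : (f q : ℕ) % 2 = r := (hf q).mpr (hside.mp hpA)
            exact hlift (by omega)
          · have h1 : (f p : ℕ) % 2 ≠ r := fun hh => hpA ((hf p).mp hh)
            have h2 : (f q : ℕ) % 2 ≠ r := fun hh => (hside.not.mp hpA) ((hf q).mp hh)
            exact hlift (by omega)
        · exact Or.inl h
        · exact Or.inr h
      · have hfu : (f u : ℕ) % 2 = r := (hf u).mpr (Or.inl humem)
        have hfx : (f x : ℕ) % 2 = r := (hf x).mpr (Or.inr hxmem)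
        have hfv : (f v : ℕ) % 2 ≠ r := fun hh => hmemA v hvmem ((hf v).mp hh)
        have hfy : (f y : ℕ) % 2 ≠ r := fun hh => hmemA y hymem ((hf y).mp hh)
        rintro (h | h)
        · rcases Sym2.eq_iff.mp h with ⟨rfl, rfl⟩ | ⟨rfl, rfl⟩
          · exact ⟨huv, by omega⟩
          · exact ⟨huv.symm, by omega⟩
        · rcases Sym2.eq_iff.mp h with ⟨rfl, rfl⟩ | ⟨rfl, rfl⟩
          · exact ⟨hxy, by omega⟩
          · exact ⟨hxy.symm, by omega⟩
  -- parity class counts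
  have h0c : {i : Fin (Fintype.card V) | (i : ℕ) % 2 = 0}.ncard = (Fintype.card V + 1) / 2 := by
    rw [fin_parity_ncard]
    exact (filter_mod_two_card (Fintype.card V)).1
  have h1c : {i : Fin (Fintype.card V) | (i : ℕ) % 2 = 1}.ncard = Fintype.card V / 2 := by
    rw [fin_parity_ncard]
    exact (filter_mod_two_card (Fintype.card V)).2
  -- existence of the good labeling
  have hexist : ∃ f : V ≃ Fin (Fintype.card V),
      negCount G f = 2 ∧ negSet G f = {s(u, v), s(x, y)} := by
    have hget : ∃ (r : ℕ), r < 2 ∧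
        A.ncard = {i : Fin (Fintype.card V) | (i : ℕ) % 2 = r}.ncard := by
      rcases ha with h | h
      · exact ⟨0, by norm_num, by rw [hAcard, h0c]; exact h⟩
      · exact ⟨1, by norm_num, by rw [hAcard, h1c]; exact h⟩
    obtain ⟨r, hr, hcardA⟩ := hget
    obtain ⟨f, hf⟩ := hAkey r hr hcardA
    have hns := negSetEq r hr f hf
    refine ⟨f, ?_, hns⟩
    rw [negCount, hns]
    exact Set.ncard_pair hne
  -- lower bound: every labeling has at least two negative edges
  have h2card : 2 ≤ Fintype.card V := by
    have hle : ({u, x} : Finset V).card ≤ Fintype.card V := Finset.card_le_univ _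
    have hcd : ({u, x} : Finset V).card = 2 := by
      rw [Finset.card_insert_of_notMem (by simp [hux]), Finset.card_singleton]
    omega
  have hlow : ∀ g : V ≃ Fin (Fintype.card V), 2 ≤ negCount G g := by
    intro g
    by_contra hcon
    push_neg at hcon
    have hfin : (negSet G g).Finite := Set.toFinite _
    have hcases : negCount G g = 0 ∨ negCount G g = 1 := by omega
    rcases hcases with h | h
    · -- no negative edge: impossible since G is connected and both classes are nonempty
      have hempty : negSet G g = ∅ := (Set.ncard_eq_zero hfin).mp h
      have h0lt : 0 < Fintype.card V := by omega
      have h1lt : 1 < Fintype.card V := by omega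
      set z0 := g.symm ⟨0, h0lt⟩ with hz0d
      set z1 := g.symm ⟨1, h1lt⟩ with hz1d
      have hz0 : (g z0 : ℕ) % 2 = 0 := by rw [hz0d]; simp
      have hz1 : (g z1 : ℕ) % 2 = 1 := by rw [hz1d]; simp
      obtain ⟨w⟩ := hconn.preconnected z0 z1
      obtain ⟨p, q, hpq, hp, hq, -⟩ := walk_cross {t : V | (g t : ℕ) % 2 = 0} w hz0
        (by simp only [Set.mem_setOf_eq]; omega)
      have hmem : s(p, q) ∈ negSet G g := by
        refine ⟨G.mem_edgeSet.mpr hpq, ?_⟩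
        rw [Sym2.lift_mk]
        simp only [Set.mem_setOf_eq] at hp hq
        exact fun hh => hq (by omega)
      rw [hempty] at hmem
      exact hmem
    · -- exactly one negative edge: it is a bridge splitting V into the two parity classes
      obtain ⟨e₀, hsing⟩ := Set.ncard_eq_one.mp h
      induction e₀ using Sym2.ind with
      | _ a b =>
      have hmem : s(a, b) ∈ negSet G g := by rw [hsing]; exact Set.mem_singleton _
      obtain ⟨hedge, hlift⟩ := hmem
      have hadj : G.Adj a b := G.mem_edgeSet.mp hedge
      have hpar : (g a : ℕ) % 2 ≠ (g b : ℕ) % 2 := by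
        rw [Sym2.lift_mk] at hlift
        exact hlift
      set E := G.deleteEdges {s(a, b)} with hE
      have hEadjG : ∀ {p q : V}, E.Adj p q → G.Adj p q := by
        intro p q hh
        rw [hE, deleteEdges_adj] at hh
        exact hh.1
      have hEadjne : ∀ {p q : V}, E.Adj p q → s(p, q) ≠ s(a, b) := by
        intro p q hh hh2
        rw [hE, deleteEdges_adj] at hh
        exact hh.2 (by rw [hh2]; exact Set.mem_singleton _)
      have hEpar : ∀ p q : V, E.Reachable p q → (g p : ℕ) % 2 = (g q : ℕ) % 2 := by
        intro p q hr
        by_contra hne'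
        obtain ⟨w⟩ := hr
        obtain ⟨p', q', h1, h2, h3, -⟩ := walk_cross {t : V | (g t : ℕ) % 2 = (g p : ℕ) % 2} w
          rfl (fun hh => hne' (Eq.symm hh))
        have hmem' : s(p', q') ∈ negSet G g := by
          refine ⟨G.mem_edgeSet.mpr (hEadjG h1), ?_⟩
          rw [Sym2.lift_mk]
          simp only [Set.mem_setOf_eq] at h2 h3
          omega
        rw [hsing] at hmem'
        exact hEadjne h1 hmem'
      have hnoreach : ¬ E.Reachable a b := fun hr => hpar (hEpar a b hr)
      have hbridge : G.IsBridge s(a, b) := isBridge_iff.mpr hnoreach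
      set Ca := {z | E.Reachable z a} with hCa
      set Cb := {z | E.Reachable z b} with hCb
      have hdisjC : ∀ z, z ∈ Ca → z ∈ Cb → False := fun z h1 h2 => hnoreach (h1.symm.trans h2)
      have hcovC : ∀ z, z ∈ Ca ∨ z ∈ Cb := by
        intro z
        by_contra hz
        push_neg at hz
        obtain ⟨hz1, hz2⟩ := hz
        obtain ⟨w⟩ := hconn.preconnected a z
        obtain ⟨p, q, h1, h2, h3, -⟩ := walk_cross (Ca ∪ Cb) w (Or.inl (Reachable.refl a))
          (by simp [hz1, hz2])
        by_cases he : s(p, q) = s(a, b)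
        · rcases Sym2.eq_iff.mp he with ⟨rfl, rfl⟩ | ⟨rfl, rfl⟩
          · exact h3 (Or.inr (Reachable.refl _))
          · exact h3 (Or.inl (Reachable.refl _))
        · have hEadj : E.Adj p q := by
            rw [hE, deleteEdges_adj]
            exact ⟨h1, by simp [he]⟩
          rcases h2 with h2 | h2
          · exact h3 (Or.inl (hEadj.symm.reachable.trans h2))
          · exact h3 (Or.inr (hEadj.symm.reachable.trans h2))
      have hCaSub : ∀ z, z ∈ Ca → (g z : ℕ) % 2 = (g a : ℕ) % 2 := fun z hz => hEpar z a hz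
      have hCbSub : ∀ z, z ∈ Cb → (g z : ℕ) % 2 = (g b : ℕ) % 2 := fun z hz => hEpar z b hz
      have hCaEq : Ca = {t : V | (g t : ℕ) % 2 = (g a : ℕ) % 2} := by
        apply Set.Subset.antisymm
        · intro z hz; exact hCaSub z hz
        · intro z hz
          simp only [Set.mem_setOf_eq] at hz
          rcases hcovC z with h' | h'
          · exact h'
          · exfalso
            have h2 := hCbSub z h'
            omega
      have hCbEq : Cb = {t : V | (g t : ℕ) % 2 = (g b : ℕ) % 2} := by
        apply Set.Subset.antisymm
        · intro z hz; exact hCbSub z hz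
        · intro z hz
          simp only [Set.mem_setOf_eq] at hz
          rcases hcovC z with h' | h'
          · exfalso
            have h2 := hCaSub z h'
            omega
          · exact h'
      have hgeCa : Fintype.card V / 2 ≤ Ca.ncard := by
        rw [hCaEq, class_ncard g ((g a : ℕ) % 2)]
        exact fin_parity_ncard_ge _ _ (Nat.mod_lt _ (by norm_num))
      have hgeCb : Fintype.card V / 2 ≤ Cb.ncard := by
        rw [hCbEq, class_ncard g ((g b : ℕ) % 2)]
        exact fin_parity_ncard_ge _ _ (Nat.mod_lt _ (by norm_num))
      -- now locate the bridge edge s(a,b)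
      rcases tri a b hadj with hD' | hEq | hEq
      · -- the bridge lies inside one of the three components
        rcases hcov a with hA' | hA' | hA'
        · -- inside G₁ (= Su)
          have hbSu : b ∈ Su := clos hD' hA'
          -- u lies in Ca or Cb
          rcases hcovC u with hu' | hu'
          · -- u ∈ Ca : show Cb ⊆ Su
            have hsub : Cb ⊆ Su := by
              intro z hz
              by_contra hzS
              obtain ⟨w⟩ := hz.symm
              obtain ⟨p, q, h1, h2, h3, h4⟩ := walk_cross Su w hbSu hzS
              have hGpq : G.Adj p q := hEadjG h1
              have heq := hbdU p q hGpq h2 h3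
              rcases Sym2.eq_iff.mp heq with ⟨rfl, _⟩ | ⟨rfl, _⟩
              · -- p = u, so u ∈ Cb, contradicting u ∈ Ca
                exact hdisjC p hu' h4.symm
              · -- p = v contradicts p ∈ Su
                exact hUV p h2 hvmem
            have := Set.ncard_le_ncard hsub (Set.toFinite _)
            have hlt := hb.1
            omega
          · -- u ∈ Cb : show Ca ⊆ Su
            have hsub : Ca ⊆ Su := by
              intro z hz
              by_contra hzS
              obtain ⟨w⟩ := hz.symm
              obtain ⟨p, q, h1, h2, h3, h4⟩ := walk_cross Su w hA' hzS
              have hGpq : G.Adj p q := hEadjG h1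
              have heq := hbdU p q hGpq h2 h3
              rcases Sym2.eq_iff.mp heq with ⟨rfl, _⟩ | ⟨rfl, _⟩
              · exact hdisjC p h4.symm hu'
              · exact hUV p h2 hvmem
            have := Set.ncard_le_ncard hsub (Set.toFinite _)
            have hlt := hb.1
            omega
        · -- inside G₂ (= Sx)
          have hbSx : b ∈ Sx := clos hD' hA'
          rcases hcovC x with hx' | hx'
          · have hsub : Cb ⊆ Sx := by
              intro z hz
              by_contra hzS
              obtain ⟨w⟩ := hz.symm
              obtain ⟨p, q, h1, h2, h3, h4⟩ := walk_cross Sx w hbSx hzS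
              have hGpq : G.Adj p q := hEadjG h1
              have heq := hbdX p q hGpq h2 h3
              rcases Sym2.eq_iff.mp heq with ⟨rfl, _⟩ | ⟨rfl, _⟩
              · exact hdisjC p hx' h4.symm
              · exact hXV p h2 hymem
            have := Set.ncard_le_ncard hsub (Set.toFinite _)
            have hlt := hb.2
            omega
          · have hsub : Ca ⊆ Sx := by
              intro z hz
              by_contra hzS
              obtain ⟨w⟩ := hz.symm
              obtain ⟨p, q, h1, h2, h3, h4⟩ := walk_cross Sx w hA' hzS
              have hGpq : G.Adj p q := hEadjG h1
              have heq := hbdX p q hGpq h2 h3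
              rcases Sym2.eq_iff.mp heq with ⟨rfl, _⟩ | ⟨rfl, _⟩
              · exact hdisjC p h4.symm hx'
              · exact hXV p h2 hymem
            have := Set.ncard_le_ncard hsub (Set.toFinite _)
            have hlt := hb.2
            omega
        · -- inside G₃ (= Sv): use hypothesis (c)
          have hbSv : b ∈ Sv := clos hD' hA'
          rcases hc a b hA' hbSv hbridge with h' | h'
          · rw [← hE, ← hCa] at h'
            omega
          · rw [← hE, ← hCb] at h'
            omega
      · -- the bridge is s(u,v) itself
        rcases Sym2.eq_iff.mp hEq with ⟨ha1, hb1''⟩ | ⟨ha1, hb1''⟩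
        · -- a = u, b = v : Ca ⊆ Su
          have hsub : Ca ⊆ Su := by
            intro z hz
            by_contra hzS
            have hau : a ∈ Su := ha1 ▸ humem
            obtain ⟨w⟩ := hz.symm
            obtain ⟨p, q, h1, h2, h3, -⟩ := walk_cross Su w hau hzS
            have heq := hbdU p q (hEadjG h1) h2 h3
            exact hEadjne h1 (heq.trans hEq.symm)
          have := Set.ncard_le_ncard hsub (Set.toFinite _)
          have hlt := hb.1
          omega
        · -- a = v, b = u : Cb ⊆ Su
          have hsub : Cb ⊆ Su := by
            intro z hz
            by_contra hzS
            have hbu : b ∈ Su := hb1'' ▸ humem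
            obtain ⟨w⟩ := hz.symm
            obtain ⟨p, q, h1, h2, h3, -⟩ := walk_cross Su w hbu hzS
            have heq := hbdU p q (hEadjG h1) h2 h3
            exact hEadjne h1 (heq.trans hEq.symm)
          have := Set.ncard_le_ncard hsub (Set.toFinite _)
          have hlt := hb.1
          omega
      · -- the bridge is s(x,y) itself
        rcases Sym2.eq_iff.mp hEq with ⟨ha1, hb1''⟩ | ⟨ha1, hb1''⟩
        · -- a = x, b = y : Ca ⊆ Sx
          have hsub : Ca ⊆ Sx := by
            intro z hz
            by_contra hzS
            have hax : a ∈ Sx := ha1 ▸ hxmem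
            obtain ⟨w⟩ := hz.symm
            obtain ⟨p, q, h1, h2, h3, -⟩ := walk_cross Sx w hax hzS
            have heq := hbdX p q (hEadjG h1) h2 h3
            exact hEadjne h1 (heq.trans hEq.symm)
          have := Set.ncard_le_ncard hsub (Set.toFinite _)
          have hlt := hb.2
          omega
        · -- a = y, b = x : Cb ⊆ Sx
          have hsub : Cb ⊆ Sx := by
            intro z hz
            by_contra hzS
            have hbx : b ∈ Sx := hb1'' ▸ hxmem
            obtain ⟨w⟩ := hz.symm
            obtain ⟨p, q, h1, h2, h3, -⟩ := walk_cross Sx w hbx hzS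
            have heq := hbdX p q (hEadjG h1) h2 h3
            exact hEadjne h1 (heq.trans hEq.symm)
          have := Set.ncard_le_ncard hsub (Set.toFinite _)
          have hlt := hb.2
          omega
  obtain ⟨f, hfc, hfs⟩ := hexist
  refine ⟨?_, f, hfc, hfs⟩
  have h2mem : (2 : ℕ) ∈ Set.range (negCount G) := ⟨f, hfc⟩
  apply le_antisymm
  · exact Nat.sInf_le h2mem
  · have hnemp : (Set.range (negCount G)).Nonempty := ⟨2, h2mem⟩
    obtain ⟨g, hg⟩ := Nat.sInf_mem hnemp
    have : rna G = sInf (Set.range (negCount G)) := rfl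
    rw [this, ← hg]
    exact hlow g
end

section
/- Let T be a tree of order n with C(T) > 1, and let uv be an edge of T such that the two components G₁, G₂ of T − uv satisfy |G₂| − |G₁| = C(T) with |G₂| > |G₁|. If there exists an edge e of G₂ such that the two components J₁, J₂ of G₂ − e satisfy |J₂| ≤ ⌈C(T)/2⌉ and |J₁| − |J₂| = ⌊n/2⌋ − ⌈C(T)/2⌉, then σ⁻(T) = 2. -/
open SimpleGraph

variable {V : Type*}

/-! ### Auxiliary lemmas -/

/-- Odd elements of `Fin n` biject with `Fin (n/2)`. -/
def auxOddEquiv (n : ℕ) : {i : Fin n // (i : ℕ) % 2 = 1} ≃ Fin (n / 2) where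
  toFun i := ⟨(i.1 : ℕ) / 2, by have := i.1.isLt; have := i.2; omega⟩
  invFun j := ⟨⟨2 * j.1 + 1, by have := j.isLt; omega⟩,
    show (2 * j.1 + 1) % 2 = 1 by omega⟩
  left_inv i := Subtype.ext (Fin.ext (show 2 * ((i.1 : ℕ) / 2) + 1 = (i.1 : ℕ) by
    have := i.2; omega))
  right_inv j := Fin.ext (show (2 * j.1 + 1) / 2 = j.1 by omega)

/-- Even elements of `Fin n` biject with `Fin (n - n/2)`. -/
def auxEvenEquiv (n : ℕ) : {i : Fin n // ¬ (i : ℕ) % 2 = 1} ≃ Fin (n - n / 2) where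
  toFun i := ⟨(i.1 : ℕ) / 2, by have := i.1.isLt; have := i.2; omega⟩
  invFun j := ⟨⟨2 * j.1, by have := j.isLt; omega⟩,
    show ¬ (2 * j.1) % 2 = 1 by omega⟩
  left_inv i := Subtype.ext (Fin.ext (show 2 * ((i.1 : ℕ) / 2) = (i.1 : ℕ) by
    have := i.2; omega))
  right_inv j := Fin.ext (show (2 * j.1) / 2 = j.1 by omega)

lemma aux_card_odd (n : ℕ) : Fintype.card {i : Fin n // (i : ℕ) % 2 = 1} = n / 2 := by
  rw [Fintype.card_congr (auxOddEquiv n), Fintype.card_fin]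

lemma aux_card_even (n : ℕ) :
    Fintype.card {i : Fin n // ¬ (i : ℕ) % 2 = 1} = n - n / 2 := by
  rw [Fintype.card_congr (auxEvenEquiv n), Fintype.card_fin]

/-- Any set of exactly half the vertices is the odd-label class of some labeling. -/
lemma exists_parity_equiv [Fintype V] (P : Set V) (hP : P.ncard = Fintype.card V / 2) :
    ∃ f : V ≃ Fin (Fintype.card V), ∀ x, x ∈ P ↔ ((f x : ℕ) % 2 = 1) := by
  classical
  set n := Fintype.card V with hn
  have hPc : Fintype.card P = n / 2 := by
    rw [← hP, Set.ncard_eq_toFinset_card', Set.toFinset_card]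
  have hPcc : Fintype.card ↥(Pᶜ) = n - n / 2 := by
    rw [Fintype.card_compl_set, hPc]
  have e₁ : ↥P ≃ {i : Fin n // (i : ℕ) % 2 = 1} :=
    Fintype.equivOfCardEq (by rw [hPc, aux_card_odd])
  have e₂ : ↥(Pᶜ) ≃ {i : Fin n // ¬ (i : ℕ) % 2 = 1} :=
    Fintype.equivOfCardEq (by rw [hPcc, aux_card_even])
  refine ⟨((Equiv.sumCompl (· ∈ P)).symm.trans ((e₁.sumCongr e₂).trans
      (Equiv.sumCompl (fun i : Fin n => (i : ℕ) % 2 = 1)))), fun x => ?_⟩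
  by_cases hx : x ∈ P
  · simp only [Equiv.trans_apply, Equiv.sumCompl_symm_apply_of_pos hx,
      Equiv.sumCongr_apply, Sum.map_inl, Equiv.sumCompl_apply_inl]
    exact iff_of_true hx (e₁ ⟨x, hx⟩).2
  · simp only [Equiv.trans_apply, Equiv.sumCompl_symm_apply_of_neg hx,
      Equiv.sumCongr_apply, Sum.map_inr, Equiv.sumCompl_apply_inr]
    exact iff_of_false hx (e₂ ⟨x, hx⟩).2

/-- Deleting one edge, every vertex reachable to `u` stays reachable to `u` or to `v`. -/
lemma reachable_delete_or {G : SimpleGraph V} (v : V) :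
    ∀ {x u : V}, G.Walk x u →
      (G.deleteEdges {s(u, v)}).Reachable x u ∨ (G.deleteEdges {s(u, v)}).Reachable x v := by
  intro x u p
  induction p with
  | nil => exact Or.inl (Reachable.refl _)
  | @cons x y u h' p ih =>
    by_cases hxy : s(x, y) = s(u, v)
    · rcases Sym2.eq_iff.mp hxy with ⟨rfl, rfl⟩ | ⟨rfl, rfl⟩
      · exact Or.inl (Reachable.refl _)
      · exact Or.inr (Reachable.refl _)
    · have hadj : (G.deleteEdges {s(u, v)}).Adj x y := by
        simp only [deleteEdges_adj, Set.mem_singleton_iff]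
        exact ⟨h', hxy⟩
      rcases ih with hy | hy
      · exact Or.inl (hadj.reachable.trans hy)
      · exact Or.inr (hadj.reachable.trans hy)

/-- A walk from inside `P` to outside `P` crosses the boundary. -/
lemma exists_cross {G : SimpleGraph V} {P : Set V} :
    ∀ {z w : V}, G.Walk z w → z ∈ P → w ∉ P →
      ∃ x y, G.Adj x y ∧ x ∈ P ∧ y ∉ P := by
  intro z w p
  induction p with
  | nil => exact fun hz hw => absurd hz hw
  | @cons z y w h' p ih =>
    intro hz hw
    by_cases hy : y ∈ P
    · exact ih hy hw
    · exact ⟨z, y, h', hz, hy⟩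

/-- If the only edge crossing the boundary of `P` is `s(x₀, y₀)`, then walks between
vertices of `P` can be replaced by walks inside `P`. -/
lemma reach_induce_aux {G : SimpleGraph V} {P : Set V} {x₀ y₀ : V}
    (hx₀ : x₀ ∈ P) (hy₀ : y₀ ∉ P)
    (hcross : ∀ x y, G.Adj x y → x ∈ P → y ∉ P → s(x, y) = s(x₀, y₀)) :
    ∀ {z w : V}, G.Walk z w →
      (∀ (hz : z ∈ P) (hw : w ∈ P), (G.induce P).Reachable ⟨z, hz⟩ ⟨w, hw⟩) ∧
      (z ∉ P → ∀ (hw : w ∈ P), (G.induce P).Reachable ⟨x₀, hx₀⟩ ⟨w, hw⟩) := by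
  intro z w p
  induction p with
  | nil =>
    exact ⟨fun hz hw => Reachable.refl _, fun hz hw => absurd hw hz⟩
  | @cons z y w h' p ih =>
    constructor
    · intro hz hw
      by_cases hy : y ∈ P
      · have hadj : (G.induce P).Adj ⟨z, hz⟩ ⟨y, hy⟩ := h'
        exact hadj.reachable.trans (ih.1 hy hw)
      · have := hcross z y h' hz hy
        rcases Sym2.eq_iff.mp this with ⟨rfl, rfl⟩ | ⟨rfl, rfl⟩
        · exact ih.2 hy hw
        · exact absurd hz hy₀
    · intro hz hw
      by_cases hy : y ∈ P
      · have := hcross y z h'.symm hy hz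
        rcases Sym2.eq_iff.mp this with ⟨rfl, rfl⟩ | ⟨rfl, rfl⟩
        · exact ih.1 hy hw
        · exact absurd hy hy₀
      · exact ih.2 hy hw

/-- If the boundary of `P` consists of the single edge `s(x₀, y₀)` and the parts are
nearly balanced, then `Cval G ≤ 1`. -/
lemma cval_le_one {G : SimpleGraph V} [Fintype V] (hG : G.Connected)
    (P : Set V) (x₀ y₀ : V) (hx₀ : x₀ ∈ P) (hy₀ : y₀ ∉ P)
    (hcross : ∀ x y, G.Adj x y → x ∈ P → y ∉ P → s(x, y) = s(x₀, y₀))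
    (hsize : ((P.ncard : ℤ) - ((Pᶜ : Set V).ncard : ℤ)).natAbs ≤ 1) :
    Cval G ≤ 1 := by
  have hconn₁ : (G.induce P).Connected := by
    have : Nonempty (↥P) := ⟨⟨x₀, hx₀⟩⟩
    refine Connected.mk fun z w => ?_
    obtain ⟨p⟩ := hG.preconnected z.1 w.1
    have := (reach_induce_aux hx₀ hy₀ hcross p).1 z.2 w.2
    simpa using this
  have hcross' : ∀ x y, G.Adj x y → x ∈ (Pᶜ : Set V) → y ∉ (Pᶜ : Set V) →
      s(x, y) = s(y₀, x₀) := by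
    intro x y hxy hx hy
    have hyP : y ∈ P := not_not.mp hy
    have := hcross y x hxy.symm hyP hx
    rw [Sym2.eq_swap] at this
    rw [this, Sym2.eq_swap]
  have hconn₂ : (G.induce (Pᶜ : Set V)).Connected := by
    have : Nonempty (↥(Pᶜ : Set V)) := ⟨⟨y₀, hy₀⟩⟩
    refine Connected.mk fun z w => ?_
    obtain ⟨p⟩ := hG.preconnected z.1 w.1
    have := (reach_induce_aux (P := (Pᶜ : Set V)) hy₀ (not_not.mpr hx₀) hcross' p).1 z.2 w.2
    simpa using this
  have hmem : (((P.ncard : ℤ) - ((Pᶜ : Set V).ncard : ℤ)).natAbs) ∈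
      {d | ∃ S : Set V, S.Nonempty ∧ Sᶜ.Nonempty ∧ (G.induce S).Connected ∧
        (G.induce Sᶜ).Connected ∧ d = ((S.ncard : ℤ) - (Sᶜ.ncard : ℤ)).natAbs} :=
    ⟨P, ⟨x₀, hx₀⟩, ⟨y₀, hy₀⟩, hconn₁, hconn₂, rfl⟩
  exact le_trans (Nat.sInf_le hmem) hsize

/-- Lower bound: a graph with `Cval > 1` has at least two negative edges in any labeling. -/
lemma two_le_negCount [Fintype V] {T : SimpleGraph V} (hT : T.IsTree) (hC : 1 < Cval T)
    (hn : 2 ≤ Fintype.card V) (f : V ≃ Fin (Fintype.card V)) : 2 ≤ negCount T f := by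
  classical
  have hn2 : 2 ≤ Fintype.card V := hn
  set P : Set V := {x | (f x : ℕ) % 2 = 1} with hP
  have hPcard : P.ncard = Fintype.card V / 2 := by
    rw [Set.ncard_eq_toFinset_card', Set.toFinset_card]
    rw [show Fintype.card ↥P = Fintype.card {x // (f x : ℕ) % 2 = 1} from rfl]
    rw [Fintype.card_congr (f.subtypeEquiv (q := fun i : Fin (Fintype.card V) => (i : ℕ) % 2 = 1)
      (fun a => Iff.rfl)), aux_card_odd]
  have hPc : (Pᶜ : Set V).ncard = Fintype.card V - Fintype.card V / 2 := by
    have := Set.ncard_add_ncard_compl P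
    rw [Nat.card_eq_fintype_card] at this
    omega
  have hmemneg : ∀ x y, T.Adj x y → x ∈ P → y ∉ P → s(x, y) ∈ negSet T f := by
    intro x y hxy hx hy
    refine ⟨hxy, ?_⟩
    simp only [Sym2.lift_mk]
    have h1 : (f x : ℕ) % 2 = 1 := hx
    have h2 : ¬ (f y : ℕ) % 2 = 1 := hy
    omega
  by_contra hlt
  push_neg at hlt
  have h01 : negCount T f = 0 ∨ negCount T f = 1 := by omega
  rcases h01 with h | h
  · -- no negative edges
    have hempty : negSet T f = ∅ := Set.ncard_eq_zero (Set.toFinite _) |>.mp h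
    have hPne : P.Nonempty := Set.nonempty_of_ncard_ne_zero (by omega)
    have hPcne : (Pᶜ : Set V).Nonempty := Set.nonempty_of_ncard_ne_zero (by omega)
    obtain ⟨z, hz⟩ := hPne
    obtain ⟨w, hw⟩ := hPcne
    obtain ⟨p⟩ := hT.isConnected.preconnected z w
    obtain ⟨x, y, hxy, hx, hy⟩ := exists_cross p hz hw
    have := hmemneg x y hxy hx hy
    rw [hempty] at this
    exact this
  · -- exactly one negative edge
    obtain ⟨e₀, he₀⟩ := Set.ncard_eq_one.mp h
    have hmem : e₀ ∈ negSet T f := by rw [he₀]; rfl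
    induction e₀ using Sym2.ind with
    | _ x₀ y₀ =>
      obtain ⟨hadj, hpar⟩ := hmem
      rw [mem_edgeSet] at hadj
      simp only [Sym2.lift_mk] at hpar
      have hsize : (((P.ncard : ℤ) - ((Pᶜ : Set V).ncard : ℤ)).natAbs) ≤ 1 := by
        rw [hPcard, hPc]; omega
      by_cases hx₀ : x₀ ∈ P
      · have hy₀ : y₀ ∉ P := fun hy => hpar (by
          have h1 : (f x₀ : ℕ) % 2 = 1 := hx₀
          have h2 : (f y₀ : ℕ) % 2 = 1 := hy
          omega)
        have hcross : ∀ x y, T.Adj x y → x ∈ P → y ∉ P → s(x, y) = s(x₀, y₀) := by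
          intro x y hxy hx hy
          have := hmemneg x y hxy hx hy
          rw [he₀] at this
          exact this
        exact absurd (cval_le_one hT.isConnected P x₀ y₀ hx₀ hy₀ hcross hsize) (by omega)
      · have hy₀ : y₀ ∈ P := by
          have h2 : ¬ (f x₀ : ℕ) % 2 = 1 := hx₀
          show (f y₀ : ℕ) % 2 = 1
          omega
        have hcross : ∀ x y, T.Adj x y → x ∈ P → y ∉ P → s(x, y) = s(y₀, x₀) := by
          intro x y hxy hx hy
          have := hmemneg x y hxy hx hy
          rw [he₀] at this
          rw [this, Sym2.eq_swap]
        exact absurd (cval_le_one hT.isConnected P y₀ x₀ hy₀ hx₀ hcross hsize) (by omega)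

/-- Sufficient condition for a tree to have σ⁻(T) = 2.  Here the components of
`T − uv` containing `u` and `v` are `G₁` and `G₂` (with `|G₂| − |G₁| = C(T)`),
and `J₁`, `J₂` are the components of `G₂ − e` (for `e = ab` an edge of `G₂`)
containing `a` and `b` respectively. -/
theorem tree_rna_eq_two {V : Type*} [Fintype V] (T : SimpleGraph V) (n : ℕ)
    (hcard : Fintype.card V = n) (hT : T.IsTree) (hC : 1 < Cval T)
    (u v : V) (huv : T.Adj u v)
    (hlt : {x | (T.deleteEdges {s(u, v)}).Reachable x u}.ncard <
           {x | (T.deleteEdges {s(u, v)}).Reachable x v}.ncard)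
    (hdiff : {x | (T.deleteEdges {s(u, v)}).Reachable x v}.ncard -
             {x | (T.deleteEdges {s(u, v)}).Reachable x u}.ncard = Cval T)
    (he : ∃ a b : V, (T.deleteEdges {s(u, v)}).Reachable a v ∧
          (T.deleteEdges {s(u, v)}).Reachable b v ∧ T.Adj a b ∧
          {x | (T.deleteEdges {s(u, v), s(a, b)}).Reachable x b}.ncard ≤ (Cval T + 1) / 2 ∧
          ({x | (T.deleteEdges {s(u, v), s(a, b)}).Reachable x a}.ncard : ℤ) -
            ({x | (T.deleteEdges {s(u, v), s(a, b)}).Reachable x b}.ncard : ℤ) =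
            ((n / 2 : ℕ) : ℤ) - (((Cval T + 1) / 2 : ℕ) : ℤ)) :
    rna T = 2 := by
  classical
  subst hcard
  obtain ⟨a, b, ha, hb, hab, hjb_le, hj_diff⟩ := he
  set T1 := T.deleteEdges {s(u, v)} with hT1
  set T2 := T.deleteEdges {s(u, v), s(a, b)} with hT2def
  set Uc : Set V := {x | T1.Reachable x u} with hUc
  set Vc : Set V := {x | T1.Reachable x v} with hVc
  set Ja : Set V := {x | T2.Reachable x a} with hJa
  set Jb : Set V := {x | T2.Reachable x b} with hJb
  -- bridges
  have hbridge : ∀ x y : V, T.Adj x y → ¬ (T.deleteEdges {s(x, y)}).Reachable x y := by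
    intro x y hxy
    have := (isAcyclic_iff_forall_adj_isBridge.mp hT.IsAcyclic) hxy
    exact isBridge_iff.mp this
  have hn2 : 2 ≤ Fintype.card V := by
    have : Nontrivial V := ⟨⟨u, v, huv.ne⟩⟩
    exact Fintype.one_lt_card
  have huv' : ¬ T1.Reachable u v := hbridge u v huv
  -- the two deleted edges are distinct
  have hne_edges : s(a, b) ≠ s(u, v) := by
    intro hEq
    rcases Sym2.eq_iff.mp hEq with ⟨rfl, rfl⟩ | ⟨rfl, rfl⟩
    · exact huv' ha
    · exact huv' hb
  -- basic graph inequalities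
  have hT2T1 : T2 ≤ T1 := by
    rw [hT1, hT2def]
    exact deleteEdges_anti (by intro e he; simp at he; simp [he])
  have hT2ab : T2 ≤ T.deleteEdges {s(a, b)} := by
    rw [hT2def]
    exact deleteEdges_anti (by intro e he; simp at he; simp [he])
  have hT2eq : T2 = T1.deleteEdges {s(a, b)} := by
    rw [hT2def, hT1, deleteEdges_deleteEdges, Set.singleton_union]
  have hab' : ¬ T2.Reachable a b := fun h => hbridge a b hab (h.mono hT2ab)
  -- set identities
  have hVc_eq : Vc = Ucᶜ := by
    ext x
    constructor
    · intro hx hx'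
      exact huv' ((hx' : T1.Reachable x u).symm.trans hx)
    · intro hx
      obtain ⟨p⟩ := hT.isConnected.preconnected x u
      rcases reachable_delete_or v p with h | h
      · exact absurd h hx
      · exact h
  have hJaVc : Ja ⊆ Vc := fun x hx => ((hx : T2.Reachable x a).mono hT2T1).trans ha
  have hJbVc : Jb ⊆ Vc := fun x hx => ((hx : T2.Reachable x b).mono hT2T1).trans hb
  have hJaJb : Disjoint Ja Jb := by
    rw [Set.disjoint_left]
    intro x hxa hxb
    exact hab' ((hxa : T2.Reachable x a).symm.trans hxb)
  have hVc_sub : Vc ⊆ Ja ∪ Jb := by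
    intro x hx
    have hxa : T1.Reachable x a := (hx : T1.Reachable x v).trans ha.symm
    obtain ⟨p⟩ := hxa
    rcases reachable_delete_or b p with h | h
    · left; rw [hJa, hT2eq]; exact h
    · right; rw [hJb, hT2eq]; exact h
  have hVc_union : Vc = Ja ∪ Jb := Set.Subset.antisymm hVc_sub (Set.union_subset hJaVc hJbVc)
  -- memberships
  have hu_not_Vc : u ∉ Vc := huv'
  have hvVc : v ∈ Vc := Reachable.refl _
  have haJa : a ∈ Ja := Reachable.refl _
  have hbJb : b ∈ Jb := Reachable.refl _
  have hu_not_Ja : u ∉ Ja := fun h => hu_not_Vc (hJaVc h)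
  have hb_not_Ja : b ∉ Ja := fun h => (Set.disjoint_left.mp hJaJb h) hbJb
  have ha_not_Jb : a ∉ Jb := fun h => (Set.disjoint_left.mp hJaJb haJa) h
  have hv_not_Uc : v ∉ Uc := fun h => huv' (h : T1.Reachable v u).symm
  have hu_not_JaJb : u ∉ Ja ∪ Jb := fun h => hu_not_Vc (hVc_union ▸ h)
  -- cardinalities
  have hcompl : Uc.ncard + Vc.ncard = Fintype.card V := by
    rw [hVc_eq]
    have := Set.ncard_add_ncard_compl Uc
    rw [Nat.card_eq_fintype_card] at this
    exact this
  have hUc_pos : 0 < Uc.ncard :=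
    (Set.ncard_pos (Set.toFinite _)).mpr ⟨u, Reachable.refl _⟩
  have hsum : Ja.ncard + Jb.ncard = Vc.ncard := by
    rw [hVc_union, Set.ncard_union_eq hJaJb (Set.toFinite _) (Set.toFinite _)]
  have hja : Ja.ncard = Fintype.card V / 2 := by omega
  have hjac : (Jaᶜ : Set V).ncard = Fintype.card V - Fintype.card V / 2 := by
    have := Set.ncard_add_ncard_compl Ja
    rw [Nat.card_eq_fintype_card] at this
    omega
  have hsize : (((Ja.ncard : ℤ) - ((Jaᶜ : Set V).ncard : ℤ)).natAbs) ≤ 1 := by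
    rw [hja, hjac]; omega
  -- v belongs to Ja
  have hvJa : v ∈ Ja := by
    rcases hVc_sub hvVc with h | h
    · exact h
    · -- v ∈ Jb: contradiction with Cval > 1
      exfalso
      have hcross : ∀ x y, T.Adj x y → x ∈ Ja → y ∉ Ja → s(x, y) = s(a, b) := by
        intro x y hxy hx hy
        by_cases h1 : s(x, y) = s(a, b)
        · exact h1
        by_cases h2 : s(x, y) = s(u, v)
        · exfalso
          rcases Sym2.eq_iff.mp h2 with ⟨rfl, rfl⟩ | ⟨rfl, rfl⟩
          · exact hu_not_Ja hx
          · exact (Set.disjoint_left.mp hJaJb hx) h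
        · exfalso
          have hadj2 : T2.Adj x y := by
            rw [hT2def]
            simp only [deleteEdges_adj, Set.mem_insert_iff, Set.mem_singleton_iff]
            exact ⟨hxy, by tauto⟩
          exact hy (hadj2.symm.reachable.trans hx)
      exact absurd (cval_le_one hT.isConnected Ja a b haJa hb_not_Ja hcross hsize) (by omega)
  have hv_not_Jb : v ∉ Jb := fun h => (Set.disjoint_left.mp hJaJb hvJa) h
  -- construct the labeling
  obtain ⟨f, hf⟩ := exists_parity_equiv Ja hja
  have hneg : negSet T f = {s(u, v), s(a, b)} := by
    ext e
    constructor
    · intro hmem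
      induction e using Sym2.ind with
      | _ x y =>
        obtain ⟨hadj, hpar⟩ := hmem
        rw [mem_edgeSet] at hadj
        simp only [Sym2.lift_mk] at hpar
        by_contra hne
        simp only [Set.mem_insert_iff, Set.mem_singleton_iff, not_or] at hne
        have hadj2 : T2.Adj x y := by
          rw [hT2def]
          simp only [deleteEdges_adj, Set.mem_insert_iff, Set.mem_singleton_iff]
          exact ⟨hadj, by tauto⟩
        have hiff : x ∈ Ja ↔ y ∈ Ja := by
          constructor
          · intro hx; exact hadj2.symm.reachable.trans hx
          · intro hy; exact hadj2.reachable.trans hy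
        rw [hf x, hf y] at hiff
        have m1 := (f x : ℕ).mod_two_eq_zero_or_one
        have m2 := (f y : ℕ).mod_two_eq_zero_or_one
        rcases m1 with h1 | h1 <;> rcases m2 with h2 | h2 <;>
          simp [h1, h2] at hiff hpar
    · intro hmem
      rcases hmem with h | h
      · subst h
        refine ⟨huv, ?_⟩
        simp only [Sym2.lift_mk]
        have h1 : ¬ (f u : ℕ) % 2 = 1 := fun hh => hu_not_Ja ((hf u).mpr hh)
        have h2 : (f v : ℕ) % 2 = 1 := (hf v).mp hvJa
        omega
      · rw [Set.mem_singleton_iff] at h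
        subst h
        refine ⟨hab, ?_⟩
        simp only [Sym2.lift_mk]
        have h1 : (f a : ℕ) % 2 = 1 := (hf a).mp haJa
        have h2 : ¬ (f b : ℕ) % 2 = 1 := fun hh => hb_not_Ja ((hf b).mpr hh)
        omega
  have hcount : negCount T f = 2 := by
    rw [negCount, hneg, Set.ncard_pair (Ne.symm hne_edges)]
  have hub : rna T ≤ 2 := by
    rw [rna, ← hcount]
    exact Nat.sInf_le ⟨f, rfl⟩
  have hlb : 2 ≤ rna T := by
    have hne : (Set.range (negCount T)).Nonempty := ⟨negCount T f, f, rfl⟩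
    obtain ⟨g, hg⟩ := Nat.sInf_mem hne
    rw [rna, ← hg]
    exact two_le_negCount hT hC hn2 g
  omega
end
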